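/- arXiv:1812.04195 — 8 statements merged into one kernel-verified Lean document; each statement's English description precedes it below -/
import Mathlib

section
/- Let ij be an ordered pair of units. Suppose Y_{i,1}, Y_{j,0}, Y*_{ij}(1), Y*_{ij}(0) are {0,1}-valued random variables on a probability space satisfying the consistency relations Y_{i,1}·Y_{j,0} = Y*_{ij}(1)·Y_{j,0} and Y_{i,1}·(1−Y_{j,0}) = Y*_{ij}(0)·(1−Y_{j,0}) almost surely, and suppose the pair (Y*_{ij}(1), Y*_{ij}(0)) is conditionally independent of Y_{j,0} given a sub-σ-algebra 𝒢. Then, almost surely, E[Y*_{ij}(1) − Y*_{ij}(0) | 𝒢] · μ_{j,0}(1 − μ_{j,0}) = Cov(Y_{i,1}, Y_{j,0} | 𝒢), where μ_{j,0} = E[Y_{j,0} | 𝒢]. -/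
/-!
By the consistency relations, `Y_{i,1} = Y*(1) Y_{j,0} + Y*(0) (1 - Y_{j,0})` almost surely, and
conditional independence factors `E[Y*(k) Y_{j,0} | 𝒢] = E[Y*(k) | 𝒢] μ_{j,0}`. Substituting both
into `E[Y_{i,1} Y_{j,0} | 𝒢] - E[Y_{i,1} | 𝒢] μ_{j,0}` leaves
`(E[Y*(1) | 𝒢] - E[Y*(0) | 𝒢]) μ_{j,0} (1 - μ_{j,0})`.
-/

open MeasureTheory ProbabilityTheory

/-- Conditional covariance of two real random variables given a sub-σ-algebra `m`:
`Cov(X, Y | m) = E[XY|m] − E[X|m]·E[Y|m]`. -/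
noncomputable def condCov {Ω : Type*} {m0 : MeasurableSpace Ω} (μ : Measure Ω)
    (m : MeasurableSpace Ω) (X Y : Ω → ℝ) : Ω → ℝ :=
  fun ω => (μ[fun ω' => X ω' * Y ω' | m]) ω - (μ[X | m]) ω * (μ[Y | m]) ω

section ZeroOneValued

variable {Ω : Type*} {m mΩ : MeasurableSpace Ω} {μ : Measure Ω} {f g : Ω → ℝ}

lemma norm_le_one_of_eq_zero_or_eq_one {x : ℝ} (hx : x = 0 ∨ x = 1) : ‖x‖ ≤ 1 := by
  rcases hx with rfl | rfl <;> simp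

lemma integrable_of_forall_eq_zero_or_eq_one [IsFiniteMeasure μ] (hf : Measurable f)
    (hf01 : ∀ ω, f ω = 0 ∨ f ω = 1) : Integrable f μ :=
  .of_bound hf.aestronglyMeasurable 1
    (.of_forall fun ω => norm_le_one_of_eq_zero_or_eq_one (hf01 ω))

lemma indicator_preimage_one_eq_self (hf01 : ∀ ω, f ω = 0 ∨ f ω = 1) :
    (f ⁻¹' {1}).indicator 1 = f := by
  funext ω
  rcases hf01 ω with h | h <;> simp [h]

/-- For `{0,1}`-valued variables `f g = 1{f = 1} ∩ {g = 1}`, so the factorisation of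
`P(f = 1, g = 1 | m)` is the factorisation of `E[f g | m]`. -/
lemma condExp_mul_ae_eq_of_condIndepFun [StandardBorelSpace Ω] [IsFiniteMeasure μ]
    {hm : m ≤ mΩ} (hf : Measurable f) (hg : Measurable g)
    (hf01 : ∀ ω, f ω = 0 ∨ f ω = 1) (hg01 : ∀ ω, g ω = 0 ∨ g ω = 1)
    (hfg : CondIndepFun m hm f g μ) :
    μ[f * g | m] =ᵐ[μ] μ[f | m] * μ[g | m] := by
  have h := (condIndepFun_iff_condExp_inter_preimage_eq_mul hf hg).mp hfg {1} {1}
    (measurableSet_singleton 1) (measurableSet_singleton 1)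
  rwa [show (fun _ : Ω ↦ (1 : ℝ)) = 1 from rfl, Set.inter_indicator_one,
    indicator_preimage_one_eq_self hf01, indicator_preimage_one_eq_self hg01] at h

end ZeroOneValued

theorem condExp_sub_mul_ae_eq_condCov {Ω : Type*} {m mΩ : MeasurableSpace Ω} {μ : Measure Ω}
    {Y D S₁ S₀ : Ω → ℝ}
    (hS₁ : Integrable S₁ μ) (hS₀ : Integrable S₀ μ)
    (hS₁D : Integrable (S₁ * D) μ) (hS₀D : Integrable (S₀ * D) μ)
    (hcons₁ : ∀ᵐ ω ∂μ, Y ω * D ω = S₁ ω * D ω)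
    (hcons₀ : ∀ᵐ ω ∂μ, Y ω * (1 - D ω) = S₀ ω * (1 - D ω))
    (hmean₁ : μ[S₁ * D | m] =ᵐ[μ] μ[S₁ | m] * μ[D | m])
    (hmean₀ : μ[S₀ * D | m] =ᵐ[μ] μ[S₀ | m] * μ[D | m]) :
    ∀ᵐ ω ∂μ, μ[S₁ - S₀ | m] ω * (μ[D | m] ω * (1 - μ[D | m] ω)) = condCov μ m Y D ω := by
  have hY : Y =ᵐ[μ] S₁ * D + (S₀ - S₀ * D) := by
    filter_upwards [hcons₁, hcons₀] with ω h₁ h₀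
    have hsplit : Y ω = Y ω * D ω + Y ω * (1 - D ω) := by ring
    rw [hsplit, h₁, h₀]
    simp only [Pi.add_apply, Pi.sub_apply, Pi.mul_apply]
    ring
  have hYD : μ[Y * D | m] =ᵐ[μ] μ[S₁ * D | m] := condExp_congr_ae hcons₁
  have hEY : μ[Y | m] =ᵐ[μ] μ[S₁ * D | m] + (μ[S₀ | m] - μ[S₀ * D | m]) :=
    (condExp_congr_ae hY).trans <| (condExp_add hS₁D (hS₀.sub hS₀D) m).trans <|
      (Filter.EventuallyEq.refl _ _).add (condExp_sub hS₀ hS₀D m)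
  filter_upwards [condExp_sub hS₁ hS₀ m, hYD, hEY, hmean₁, hmean₀]
    with ω hsub hYD hEY hmean₁ hmean₀
  simp only [Pi.add_apply, Pi.sub_apply, Pi.mul_apply] at hsub hEY hmean₁ hmean₀
  change _ = μ[Y * D | m] ω - μ[Y | m] ω * μ[D | m] ω
  rw [hsub, hYD, hEY, hmean₁, hmean₀]
  ring

theorem stmt0_general {Ω : Type*} [mΩ : MeasurableSpace Ω] [StandardBorelSpace Ω]
    (μ : Measure Ω) [IsProbabilityMeasure μ]
    (Yi1 Yj0 Ys1 Ys0 : Ω → ℝ)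
    (hYj0 : Measurable Yj0)
    (hYs1 : Measurable Ys1) (hYs0 : Measurable Ys0)
    (hYj0b : ∀ ω, Yj0 ω = 0 ∨ Yj0 ω = 1)
    (hYs1b : ∀ ω, Ys1 ω = 0 ∨ Ys1 ω = 1)
    (hYs0b : ∀ ω, Ys0 ω = 0 ∨ Ys0 ω = 1)
    (G : MeasurableSpace Ω) (hG : G ≤ mΩ)
    (hcons1 : ∀ᵐ ω ∂μ, Yi1 ω * Yj0 ω = Ys1 ω * Yj0 ω)
    (hcons0 : ∀ᵐ ω ∂μ, Yi1 ω * (1 - Yj0 ω) = Ys0 ω * (1 - Yj0 ω))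
    (hindep : CondIndepFun G hG (fun ω => (Ys1 ω, Ys0 ω)) Yj0 μ) :
    ∀ᵐ ω ∂μ,
      (μ[fun ω' => Ys1 ω' - Ys0 ω' | G]) ω
          * ((μ[Yj0 | G]) ω * (1 - (μ[Yj0 | G]) ω))
        = condCov μ G Yi1 Yj0 ω := by
  have hYj0_bdd : ∀ᵐ ω ∂μ, ‖Yj0 ω‖ ≤ 1 :=
    .of_forall fun ω => norm_le_one_of_eq_zero_or_eq_one (hYj0b ω)
  have hint1 : Integrable Ys1 μ := integrable_of_forall_eq_zero_or_eq_one hYs1 hYs1b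
  have hint0 : Integrable Ys0 μ := integrable_of_forall_eq_zero_or_eq_one hYs0 hYs0b
  exact condExp_sub_mul_ae_eq_condCov hint1 hint0
    (hint1.mul_bdd hYj0.aestronglyMeasurable hYj0_bdd)
    (hint0.mul_bdd hYj0.aestronglyMeasurable hYj0_bdd) hcons1 hcons0
    (condExp_mul_ae_eq_of_condIndepFun hYs1 hYj0 hYs1b hYj0b
      (hindep.comp measurable_fst measurable_id))
    (condExp_mul_ae_eq_of_condIndepFun hYs0 hYj0 hYs0b hYj0b
      (hindep.comp measurable_snd measurable_id))

/-- edge-level identification identity, proof of Lemma 2.1(A) of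
He–Song, "Measuring Diffusion over a Large Network".
If `Y_{i,1}, Y_{j,0}, Y*_{ij}(1), Y*_{ij}(0)` are `{0,1}`-valued, satisfy the consistency
relations, and the pair of counterfactuals is conditionally independent of `Y_{j,0}` given `𝒢`,
then a.s. `E[Y*_{ij}(1) − Y*_{ij}(0) | 𝒢] · μ_{j,0}(1 − μ_{j,0}) = Cov(Y_{i,1}, Y_{j,0} | 𝒢)`. -/
theorem stmt0 {Ω : Type*} [mΩ : MeasurableSpace Ω] [StandardBorelSpace Ω]
    (μ : Measure Ω) [IsProbabilityMeasure μ]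
    (Yi1 Yj0 Ys1 Ys0 : Ω → ℝ)
    (hYi1 : Measurable Yi1) (hYj0 : Measurable Yj0)
    (hYs1 : Measurable Ys1) (hYs0 : Measurable Ys0)
    (hYi1b : ∀ ω, Yi1 ω = 0 ∨ Yi1 ω = 1)
    (hYj0b : ∀ ω, Yj0 ω = 0 ∨ Yj0 ω = 1)
    (hYs1b : ∀ ω, Ys1 ω = 0 ∨ Ys1 ω = 1)
    (hYs0b : ∀ ω, Ys0 ω = 0 ∨ Ys0 ω = 1)
    (G : MeasurableSpace Ω) (hG : G ≤ mΩ)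
    (hcons1 : ∀ᵐ ω ∂μ, Yi1 ω * Yj0 ω = Ys1 ω * Yj0 ω)
    (hcons0 : ∀ᵐ ω ∂μ, Yi1 ω * (1 - Yj0 ω) = Ys0 ω * (1 - Yj0 ω))
    (hindep : CondIndepFun G hG (fun ω => (Ys1 ω, Ys0 ω)) Yj0 μ) :
    ∀ᵐ ω ∂μ,
      (μ[fun ω' => Ys1 ω' - Ys0 ω' | G]) ω
          * ((μ[Yj0 | G]) ω * (1 - (μ[Yj0 | G]) ω))
        = condCov μ G Yi1 Yj0 ω :=
  stmt0_general (mΩ := mΩ) μ Yi1 Yj0 Ys1 Ys0 hYj0 hYs1 hYs0 hYj0b hYs1b hYs0b G hG hcons1 hcons0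
    hindep
end

section
/- Let N be a finite set of n units, G = (N, E_G) a directed graph without self-loops with in-neighborhoods N_G(i) = {j : ij ∈ E_G}, and 𝒢 a sub-σ-algebra. Suppose Y_{j,0}, Y_{i,1} are {0,1}-valued random variables for all i, j ∈ N, and for each edge ij ∈ E_G there are {0,1}-valued random variables Y*_{ij}(1), Y*_{ij}(0) satisfying Y_{i,1}·Y_{j,0} = Y*_{ij}(1)·Y_{j,0} and Y_{i,1}·(1−Y_{j,0}) = Y*_{ij}(0)·(1−Y_{j,0}) almost surely, with (Y*_{ij}(1), Y*_{ij}(0)) conditionally independent of Y_{j,0} given 𝒢. Let μ_{j,0} = E[Y_{j,0}|𝒢], v² = (1/n)Σ_{j∈N} μ_{j,0}(1−μ_{j,0}), and assume v² > 0 almost surely. Then, almost surely, D = C_G, where D = Σ_{j∈N} w_j Σ_{i: ij∈E_G} E[Y*_{ij}(1) − Y*_{ij}(0) | 𝒢] with weights w_j = μ_{j,0}(1−μ_{j,0})/(n v²), and C_G = (1/(n v²)) Σ_{ij∈E_G} Cov(Y_{i,1}, Y_{j,0} | 𝒢). -/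
open MeasureTheory ProbabilityTheory

lemma my_int01 {Ω : Type*} {m : MeasurableSpace Ω} {μ : Measure Ω} [IsFiniteMeasure μ]
    {f : Ω → ℝ} (hm : Measurable[m] f) (hb : ∀ ω, f ω = 0 ∨ f ω = 1) :
    Integrable f μ := by
  refine Integrable.mono' (integrable_const 1) hm.aestronglyMeasurable ?_
  exact Filter.Eventually.of_forall fun ω => by rcases hb ω with h | h <;> simp [h]

lemma my_ind1 {Ω : Type*} {f : Ω → ℝ} (hb : ∀ ω, f ω = 0 ∨ f ω = 1) :
    (f ⁻¹' {1}).indicator (fun _ => (1:ℝ)) = f := by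
  funext ω
  rcases hb ω with h | h <;> simp [Set.indicator_apply, h]

lemma my_ind_mul1 {Ω : Type*} {f g : Ω → ℝ} (hf : ∀ ω, f ω = 0 ∨ f ω = 1)
    (hg : ∀ ω, g ω = 0 ∨ g ω = 1) :
    (f ⁻¹' {1} ∩ g ⁻¹' {1}).indicator (fun _ => (1:ℝ)) = fun ω => f ω * g ω := by
  funext ω
  rcases hf ω with h1 | h1 <;> rcases hg ω with h2 | h2 <;>
    simp [Set.indicator_apply, Set.mem_inter_iff, h1, h2]

lemma my_ind_mul0 {Ω : Type*} {f g : Ω → ℝ} (hf : ∀ ω, f ω = 0 ∨ f ω = 1)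
    (hg : ∀ ω, g ω = 0 ∨ g ω = 1) :
    (f ⁻¹' {1} ∩ g ⁻¹' {0}).indicator (fun _ => (1:ℝ)) = fun ω => f ω * (1 - g ω) := by
  funext ω
  rcases hf ω with h1 | h1 <;> rcases hg ω with h2 | h2 <;>
    simp [Set.indicator_apply, Set.mem_inter_iff, h1, h2]

lemma my_ind0 {Ω : Type*} {g : Ω → ℝ} (hg : ∀ ω, g ω = 0 ∨ g ω = 1) :
    (g ⁻¹' {0}).indicator (fun _ => (1:ℝ)) = fun ω => 1 - g ω := by
  funext ω
  rcases hg ω with h | h <;> simp [Set.indicator_apply, h]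

/-- Per-edge identity: conditional covariance equals spillover times conditional variance. -/
lemma my_edge_key {Ω : Type*} [mΩ : MeasurableSpace Ω] [StandardBorelSpace Ω]
    (μ : Measure Ω) [IsProbabilityMeasure μ]
    (G : MeasurableSpace Ω) (hG : G ≤ mΩ)
    {A B X1 X0 : Ω → ℝ}
    (hAm : Measurable[mΩ] A) (hBm : Measurable[mΩ] B)
    (hX1m : Measurable[mΩ] X1) (hX0m : Measurable[mΩ] X0)
    (hBb : ∀ ω, B ω = 0 ∨ B ω = 1)
    (hX1b : ∀ ω, X1 ω = 0 ∨ X1 ω = 1) (hX0b : ∀ ω, X0 ω = 0 ∨ X0 ω = 1)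
    (hc1 : ∀ᵐ ω ∂μ, A ω * B ω = X1 ω * B ω)
    (hc0 : ∀ᵐ ω ∂μ, A ω * (1 - B ω) = X0 ω * (1 - B ω))
    (hind : CondIndepFun G hG (fun ω => (X1 ω, X0 ω)) B μ) :
    ∀ᵐ ω ∂μ, condCov μ G A B ω =
      (μ[fun ω' => X1 ω' - X0 ω' | G]) ω * ((μ[B | G]) ω * (1 - (μ[B | G]) ω)) := by
  have hprod := (condIndepFun_iff_condExp_inter_preimage_eq_mul
    (hm' := hG) (hX1m.prodMk hX0m) hBm).mp hind
  -- E[X1 * B | G] = E[X1|G] * E[B|G]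
  have h1 : (μ[fun ω => X1 ω * B ω | G]) =ᵐ[μ]
      fun ω => (μ[X1 | G]) ω * (μ[B | G]) ω := by
    have := hprod (Prod.fst ⁻¹' {1}) {1}
      (measurable_fst (measurableSet_singleton 1)) (measurableSet_singleton 1)
    have hpre : (fun ω => (X1 ω, X0 ω)) ⁻¹' (Prod.fst ⁻¹' {1}) = X1 ⁻¹' {1} := rfl
    rw [hpre, my_ind_mul1 hX1b hBb, my_ind1 hX1b, my_ind1 hBb] at this
    exact this
  -- E[1 - B | G] = 1 - E[B|G]
  have h1mB : (μ[fun ω => 1 - B ω | G]) =ᵐ[μ] fun ω => 1 - (μ[B | G]) ω := by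
    have hsub := condExp_sub (m := G) (μ := μ) (integrable_const (μ := μ) (1:ℝ))
      (my_int01 hBm hBb)
    have hc : μ[fun _ : Ω => (1:ℝ) | G] = fun _ => (1:ℝ) := condExp_const hG 1
    have heq : (fun ω => 1 - B ω) = (fun _ : Ω => (1:ℝ)) - B := rfl
    rw [heq]
    refine hsub.trans ?_
    rw [hc]
    exact Filter.Eventually.of_forall fun ω => by simp [Pi.sub_apply]
  -- E[X0 * (1 - B) | G] = E[X0|G] * (1 - E[B|G])
  have h0 : (μ[fun ω => X0 ω * (1 - B ω) | G]) =ᵐ[μ]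
      fun ω => (μ[X0 | G]) ω * (1 - (μ[B | G]) ω) := by
    have := hprod (Prod.snd ⁻¹' {1}) {0}
      (measurable_snd (measurableSet_singleton 1)) (measurableSet_singleton 0)
    have hpre : (fun ω => (X1 ω, X0 ω)) ⁻¹' (Prod.snd ⁻¹' {1}) = X0 ⁻¹' {1} := rfl
    rw [hpre, my_ind_mul0 hX0b hBb, my_ind1 hX0b, my_ind0 hBb] at this
    refine this.trans ?_
    filter_upwards [h1mB] with ω hω
    rw [hω]
  -- E[A * B|G] = E[X1|G] * E[B|G]
  have hAB : (μ[fun ω => A ω * B ω | G]) =ᵐ[μ]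
      fun ω => (μ[X1 | G]) ω * (μ[B | G]) ω :=
    (condExp_congr_ae (m := G) hc1).trans h1
  -- E[A|G] = E[X1|G] * m + E[X0|G] * (1 - m)
  have hdec : A =ᵐ[μ] (fun ω => X1 ω * B ω) + (fun ω => X0 ω * (1 - B ω)) := by
    filter_upwards [hc1, hc0] with ω e1 e0
    have : A ω = A ω * B ω + A ω * (1 - B ω) := by ring
    simp only [Pi.add_apply]
    rw [this, e1, e0]
  have hA : (μ[A | G]) =ᵐ[μ]
      fun ω => (μ[X1 | G]) ω * (μ[B | G]) ω + (μ[X0 | G]) ω * (1 - (μ[B | G]) ω) := by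
    refine (condExp_congr_ae (m := G) hdec).trans ?_
    have hi1 : Integrable (fun ω => X1 ω * B ω) μ := by
      refine my_int01 (hX1m.mul hBm) fun ω => ?_
      rcases hX1b ω with h | h <;> rcases hBb ω with h' | h' <;> simp [h, h']
    have hi0 : Integrable (fun ω => X0 ω * (1 - B ω)) μ := by
      refine my_int01 (hX0m.mul (hBm.const_sub 1)) fun ω => ?_
      rcases hX0b ω with h | h <;> rcases hBb ω with h' | h' <;> simp [h, h']
    refine (condExp_add (m := G) hi1 hi0).trans ?_
    filter_upwards [h1, h0] with ω e1 e0
    simp only [Pi.add_apply]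
    rw [e1, e0]
  have hS : (μ[fun ω' => X1 ω' - X0 ω' | G]) =ᵐ[μ]
      fun ω => (μ[X1 | G]) ω - (μ[X0 | G]) ω := by
    have heq : (fun ω' => X1 ω' - X0 ω') = X1 - X0 := rfl
    rw [heq]
    refine (condExp_sub (m := G) (my_int01 hX1m hX1b) (my_int01 hX0m hX0b)).trans ?_
    exact Filter.Eventually.of_forall fun ω => by simp [Pi.sub_apply]
  filter_upwards [hAB, hA, hS] with ω eAB eA eS
  simp only [condCov]
  rw [eAB, eA, eS]
  ring

lemma my_sum_edges {N : Type*} [Fintype N] [DecidableEq N] (E : Finset (N × N))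
    (f : N × N → ℝ) :
    ∑ e ∈ E, f e = ∑ j, ∑ i ∈ Finset.univ.filter (fun i => (i, j) ∈ E), f (i, j) := by
  classical
  have h : ∑ e ∈ E, f e = ∑ e : N × N, if e ∈ E then f e else 0 := by
    rw [Finset.sum_ite_mem, Finset.univ_inter]
  rw [h, Fintype.sum_prod_type, Finset.sum_comm]
  exact Finset.sum_congr rfl fun j _ => (Finset.sum_filter _ _).symm

/-- Lemma 2.1(A) of He–Song, "Measuring Diffusion over a Large Network".
Under the unconfoundedness condition, the diffusion parameter `D` (a weighted average
spillover effect over the edges of the causal graph) equals the covariance measure `C_G`,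
almost surely.  Edges `(i, j) ∈ E_G` represent a causal link from `Y_{j,0}` to `Y_{i,1}`,
so that the in-neighborhood of `i` is `N_G(i) = {j : (i,j) ∈ E_G}`. -/
theorem stmt1 {Ω : Type*} [mΩ : MeasurableSpace Ω] [StandardBorelSpace Ω]
    (μ : Measure Ω) [IsProbabilityMeasure μ]
    {N : Type*} [Fintype N] [DecidableEq N]
    (E : Finset (N × N)) (hE : ∀ e ∈ E, e.1 ≠ e.2)
    (Y0 Y1 : N → Ω → ℝ) (Ys1 Ys0 : N → N → Ω → ℝ)
    (hY0m : ∀ j, Measurable (Y0 j)) (hY1m : ∀ i, Measurable (Y1 i))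
    (hYs1m : ∀ i j, (i, j) ∈ E → Measurable (Ys1 i j))
    (hYs0m : ∀ i j, (i, j) ∈ E → Measurable (Ys0 i j))
    (hY0b : ∀ j ω, Y0 j ω = 0 ∨ Y0 j ω = 1)
    (hY1b : ∀ i ω, Y1 i ω = 0 ∨ Y1 i ω = 1)
    (hYs1b : ∀ i j, (i, j) ∈ E → ∀ ω, Ys1 i j ω = 0 ∨ Ys1 i j ω = 1)
    (hYs0b : ∀ i j, (i, j) ∈ E → ∀ ω, Ys0 i j ω = 0 ∨ Ys0 i j ω = 1)
    (G : MeasurableSpace Ω) (hG : G ≤ mΩ)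
    (hcons1 : ∀ i j, (i, j) ∈ E →
      ∀ᵐ ω ∂μ, Y1 i ω * Y0 j ω = Ys1 i j ω * Y0 j ω)
    (hcons0 : ∀ i j, (i, j) ∈ E →
      ∀ᵐ ω ∂μ, Y1 i ω * (1 - Y0 j ω) = Ys0 i j ω * (1 - Y0 j ω))
    (hindep : ∀ i j, (i, j) ∈ E →
      CondIndepFun G hG (fun ω => (Ys1 i j ω, Ys0 i j ω)) (Y0 j) μ)
    -- the aggregated overlap condition `v² > 0` a.s.
    (hv : ∀ᵐ ω ∂μ,
      0 < (1 / (Fintype.card N : ℝ)) *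
            ∑ j, (μ[Y0 j | G]) ω * (1 - (μ[Y0 j | G]) ω)) :
    ∀ᵐ ω ∂μ,
      -- D : weighted average spillover effect
      (∑ j, ((μ[Y0 j | G]) ω * (1 - (μ[Y0 j | G]) ω)
              / ((Fintype.card N : ℝ) *
                  ((1 / (Fintype.card N : ℝ)) *
                    ∑ l, (μ[Y0 l | G]) ω * (1 - (μ[Y0 l | G]) ω))))
          * ∑ i ∈ Finset.univ.filter (fun i => (i, j) ∈ E),
              (μ[fun ω' => Ys1 i j ω' - Ys0 i j ω' | G]) ω)
        -- C_G : weighted average of conditional covariances along the graph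
        = (1 / ((Fintype.card N : ℝ) *
              ((1 / (Fintype.card N : ℝ)) *
                ∑ l, (μ[Y0 l | G]) ω * (1 - (μ[Y0 l | G]) ω))))
            * ∑ e ∈ E, condCov μ G (Y1 e.1) (Y0 e.2) ω := by
  classical
  have key : ∀ e : N × N, e ∈ E → ∀ᵐ ω ∂μ,
      condCov μ G (Y1 e.1) (Y0 e.2) ω =
        (μ[fun ω' => Ys1 e.1 e.2 ω' - Ys0 e.1 e.2 ω' | G]) ω *
          ((μ[Y0 e.2 | G]) ω * (1 - (μ[Y0 e.2 | G]) ω)) := fun e he =>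
    my_edge_key (mΩ := mΩ) μ G hG (hY1m e.1) (hY0m e.2) (hYs1m _ _ he) (hYs0m _ _ he)
      (hY0b e.2) (hYs1b _ _ he) (hYs0b _ _ he) (hcons1 _ _ he) (hcons0 _ _ he)
      (hindep _ _ he)
  have hall : ∀ᵐ ω ∂μ, ∀ e : N × N, e ∈ E →
      condCov μ G (Y1 e.1) (Y0 e.2) ω =
        (μ[fun ω' => Ys1 e.1 e.2 ω' - Ys0 e.1 e.2 ω' | G]) ω *
          ((μ[Y0 e.2 | G]) ω * (1 - (μ[Y0 e.2 | G]) ω)) := by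
    rw [MeasureTheory.ae_all_iff]
    intro e
    by_cases he : e ∈ E
    · exact (key e he).mono fun ω h _ => h
    · exact Filter.Eventually.of_forall fun ω h => absurd h he
  filter_upwards [hall] with ω hω
  have habc : ∀ (K : ℝ) (a t : N → ℝ),
      ∑ j, a j / K * t j = 1 / K * ∑ j, t j * a j := by
    intro K a t
    rw [Finset.mul_sum]
    exact Finset.sum_congr rfl fun j _ => by ring
  refine Eq.trans (habc _ (fun j => (μ[Y0 j | G]) ω * (1 - (μ[Y0 j | G]) ω))
    (fun j => ∑ i ∈ Finset.univ.filter (fun i => (i, j) ∈ E),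
      (μ[fun ω' => Ys1 i j ω' - Ys0 i j ω' | G]) ω)) ?_
  refine congrArg _ ?_
  rw [my_sum_edges E (fun e => condCov μ G (Y1 e.1) (Y0 e.2) ω)]
  refine Finset.sum_congr rfl fun j _ => ?_
  rw [Finset.sum_mul]
  exact Finset.sum_congr rfl fun i hi => (hω (i, j) (Finset.mem_filter.mp hi).2).symm
end

section
/- Let ij be an ordered pair of units with i ≠ j. Suppose Y_{i,0}, Y_{i,1}, Y_{j,0}, Y*_{ij}(1), Y*_{ij}(0) are {0,1}-valued random variables satisfying: (a) the consistency relations Y_{i,1}·Y_{j,0} = Y*_{ij}(1)·Y_{j,0} and Y_{i,1}·(1−Y_{j,0}) = Y*_{ij}(0)·(1−Y_{j,0}) almost surely; (b) irreversibility, Y_{i,1}·(1−Y_{i,0}) = Y_{i,1} almost surely; (c) Y_{i,0} and Y_{j,0} are conditionally independent given a sub-σ-algebra 𝒢; (d) (Y*_{ij}(1), Y*_{ij}(0)) is conditionally independent of Y_{j,0} given the σ-algebra generated by 𝒢 and Y_{i,0}. Then, almost surely, E[(Y*_{ij}(1) − Y*_{ij}(0))·1{Y_{i,0} = 0} | 𝒢]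 · μ_{j,0}(1 − μ_{j,0}) = Cov(Y_{i,1}, Y_{j,0} | 𝒢), where μ_{j,0} = E[Y_{j,0}|𝒢]. -/
/-!
Write `F = 1 - Y_{i,0}`, the indicator of `Y_{i,0} = 0`. Consistency and irreversibility give
`Y_{i,1} = F·Y*(1)·Y_{j,0} + F·Y*(0)·(1 - Y_{j,0})` almost surely, so with `A_k = E[F·Y*(k) | 𝒢]`
everything reduces to `E[F·Y*(k)·Y_{j,0} | 𝒢] = A_k·μ_{j,0}`: then
`Cov(Y_{i,1}, Y_{j,0} | 𝒢) = (A_1 - A_0)·μ_{j,0}(1 - μ_{j,0})`, the conditional variance of the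
binary `Y_{j,0}` appearing as the factor. To get the factorization, condition first on
`𝒢 ∨ σ(Y_{i,0})`: there `F` is known, (d) splits `E[Y*(k)·Y_{j,0}]` into a product, and (c) makes
`E[Y_{j,0} | 𝒢 ∨ σ(Y_{i,0})] = μ_{j,0}` (checked on the π-system of sets `g ∩ a`, `g ∈ 𝒢`,
`a ∈ σ(Y_{i,0})`). The tower property brings the product back down to `𝒢`.
-/

open MeasureTheory ProbabilityTheory

open MeasurableSpace Set

lemma isPiSystem_image2_inter {α : Type*} {p q : Set (Set α)} (hp : IsPiSystem p)
    (hq : IsPiSystem q) : IsPiSystem (image2 (· ∩ ·) p q) := by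
  rintro _ ⟨a, ha, b, hb, rfl⟩ _ ⟨c, hc, d, hd, rfl⟩ hne
  rw [inter_inter_inter_comm] at hne ⊢
  exact mem_image2_of_mem (hp a ha c hc hne.left) (hq b hb d hd hne.right)

lemma generateFrom_image2_inter_measurableSet {α : Type*} (m₁ m₂ : MeasurableSpace α) :
    generateFrom (image2 (· ∩ ·) {s | MeasurableSet[m₁] s} {s | MeasurableSet[m₂] s})
      = m₁ ⊔ m₂ := by
  refine le_antisymm (generateFrom_le ?_) (sup_le (fun a ha => ?_) (fun b hb => ?_))
  · rintro _ ⟨a, ha, b, hb, rfl⟩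
    exact (le_sup_left (b := m₂) a ha).inter (le_sup_right (a := m₁) b hb)
  · rw [← inter_univ a]
    exact measurableSet_generateFrom (mem_image2_of_mem ha MeasurableSet.univ)
  · rw [← univ_inter b]
    exact measurableSet_generateFrom (mem_image2_of_mem MeasurableSet.univ hb)

theorem ae_eq_condExp_of_forall_setIntegral_eq_of_isPiSystem {Ω E : Type*}
    [NormedAddCommGroup E] [NormedSpace ℝ E] [CompleteSpace E] {m mΩ : MeasurableSpace Ω}
    {μ : Measure Ω} (hm : m ≤ mΩ) [SigmaFinite (μ.trim hm)] {p : Set (Set Ω)}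
    (h_gen : m = generateFrom p) (h_pi : IsPiSystem p) {f g : Ω → E} (hf : Integrable f μ)
    (hg : Integrable g μ) (hgm : AEStronglyMeasurable[m] g μ)
    (h_basic : ∀ s ∈ p, ∫ x in s, g x ∂μ = ∫ x in s, f x ∂μ)
    (h_univ : ∫ x, g x ∂μ = ∫ x, f x ∂μ) :
    g =ᵐ[μ] μ[f | m] := by
  refine ae_eq_condExp_of_forall_setIntegral_eq hm hf (fun _ _ _ => hg.integrableOn)
    (fun s hs _ => ?_) hgm
  clear ‹μ s < ⊤›
  induction s, hs using MeasurableSpace.induction_on_inter h_gen h_pi with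
  | empty => simp
  | basic s hs => exact h_basic s hs
  | compl s hs ih =>
    rw [setIntegral_compl (hm s hs) hf, setIntegral_compl (hm s hs) hg, ih, h_univ]
  | iUnion s hdisj hs ih =>
    rw [integral_iUnion (fun i => hm _ (hs i)) hdisj hg.integrableOn,
      integral_iUnion (fun i => hm _ (hs i)) hdisj hf.integrableOn]
    exact tsum_congr ih

section CondIndep

variable {Ω : Type*} {m m₁ m₂ mΩ : MeasurableSpace Ω} [StandardBorelSpace Ω] {μ : Measure Ω}
  [IsFiniteMeasure μ]

theorem ProbabilityTheory.CondIndep.condExp_sup_indicator_ae_eq {hm : m ≤ mΩ}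
    (hm₁ : m₁ ≤ mΩ) (hm₂ : m₂ ≤ mΩ) (h : CondIndep m m₁ m₂ hm μ) {t : Set Ω}
    (ht : MeasurableSet[m₂] t) :
    μ⟦t | m ⊔ m₁⟧ =ᵐ[μ] μ⟦t | m⟧ := by
  have hmul := (condIndep_iff m m₁ m₂ hm hm₁ hm₂ μ).1 h
  have hint_ind : ∀ {s : Set Ω}, MeasurableSet s → Integrable (s.indicator fun _ => (1 : ℝ)) μ :=
    fun hs => (integrable_const 1).indicator hs
  refine (ae_eq_condExp_of_forall_setIntegral_eq_of_isPiSystem (sup_le hm hm₁)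
    (generateFrom_image2_inter_measurableSet m m₁).symm
    (isPiSystem_image2_inter (@isPiSystem_measurableSet _ m) (@isPiSystem_measurableSet _ m₁))
    (hint_ind (hm₂ t ht)) integrable_condExp
    (stronglyMeasurable_condExp.mono (le_sup_left : m ≤ m ⊔ m₁)).aestronglyMeasurable ?_
    (integral_condExp hm)).symm
  rintro _ ⟨g, hg, a, ha, rfl⟩
  have ha' : MeasurableSet a := hm₁ a ha
  have hind : a.indicator (μ⟦t | m⟧) = μ⟦t | m⟧ * a.indicator fun _ => 1 := by
    ext ω; by_cases hω : ω ∈ a <;> simp [hω]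
  have hint_mul : Integrable (μ⟦t | m⟧ * a.indicator fun _ => 1) μ :=
    hind ▸ integrable_condExp.indicator ha'
  calc ∫ x in g ∩ a, (μ⟦t | m⟧) x ∂μ
      = ∫ x in g, a.indicator (μ⟦t | m⟧) x ∂μ := (setIntegral_indicator ha').symm
    _ = ∫ x in g, (μ[μ⟦t | m⟧ * a.indicator fun _ => 1 | m]) x ∂μ := by
      rw [hind, setIntegral_condExp hm hint_mul hg]
    _ = ∫ x in g, (μ⟦t | m⟧ * μ⟦a | m⟧) x ∂μ := by
      refine setIntegral_congr_ae (hm g hg) ?_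
      filter_upwards [condExp_mul_of_stronglyMeasurable_left stronglyMeasurable_condExp hint_mul
        (hint_ind ha')] with ω hω _ using hω
    _ = ∫ x in g, (μ⟦a ∩ t | m⟧) x ∂μ := by
      refine setIntegral_congr_ae (hm g hg) ?_
      filter_upwards [hmul a t ha ht] with ω hω _
      rw [hω, Pi.mul_apply, Pi.mul_apply, mul_comm]
    _ = ∫ x in g ∩ a, t.indicator (fun _ => (1 : ℝ)) x ∂μ := by
      rw [setIntegral_condExp hm (hint_ind (ha'.inter (hm₂ t ht))) hg, ← indicator_indicator,
        setIntegral_indicator ha']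

end CondIndep

section ZeroOneValued

variable {Ω : Type*} {m m' mΩ : MeasurableSpace Ω} {μ : Measure Ω} {X Y : Ω → ℝ}

lemma eq_indicator_preimage_one (hX : ∀ ω, X ω = 0 ∨ X ω = 1) :
    X = (X ⁻¹' {1}).indicator fun _ => 1 := by
  ext ω
  rcases hX ω with h | h <;> simp [h]

lemma norm_le_one_of_eq_zero_or_eq_one_s2 (hX : ∀ ω, X ω = 0 ∨ X ω = 1) (ω : Ω) : ‖X ω‖ ≤ 1 := by
  rcases hX ω with h | h <;> simp [h]

lemma integrable_of_eq_zero_or_eq_one [IsFiniteMeasure μ] (hXm : Measurable X)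
    (hX : ∀ ω, X ω = 0 ∨ X ω = 1) : Integrable X μ := by
  rw [eq_indicator_preimage_one hX]
  exact (integrable_const 1).indicator (hXm (measurableSet_singleton 1))

lemma MeasureTheory.Integrable.mul_of_eq_zero_or_eq_one (hX : Integrable X μ) (hYm : Measurable Y)
    (hY : ∀ ω, Y ω = 0 ∨ Y ω = 1) : Integrable (X * Y) μ :=
  hX.mul_bdd hYm.aestronglyMeasurable (ae_of_all _ (norm_le_one_of_eq_zero_or_eq_one_s2 hY))

theorem condCov_ae_eq_of_ae_eq_mul_add_mul {Z₁ Z₀ : Ω → ℝ} (hYm : Measurable Y)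
    (hY : ∀ ω, Y ω = 0 ∨ Y ω = 1) (hZ₁ : Integrable Z₁ μ) (hZ₀ : Integrable Z₀ μ)
    (hX : X =ᵐ[μ] Z₁ * Y + Z₀ * (1 - Y))
    (h₁ : μ[Z₁ * Y | m] =ᵐ[μ] μ[Z₁ | m] * μ[Y | m])
    (h₀ : μ[Z₀ * Y | m] =ᵐ[μ] μ[Z₀ | m] * μ[Y | m]) :
    condCov μ m X Y =ᵐ[μ] (μ[Z₁ | m] - μ[Z₀ | m]) * (μ[Y | m] * (1 - μ[Y | m])) := by
  have hZ₁Y := hZ₁.mul_of_eq_zero_or_eq_one hYm hY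
  have hZ₀Y := hZ₀.mul_of_eq_zero_or_eq_one hYm hY
  have hXY : μ[fun ω => X ω * Y ω | m] =ᵐ[μ] μ[Z₁ * Y | m] := by
    refine condExp_congr_ae ?_
    filter_upwards [hX] with ω h
    rcases hY ω with hy | hy <;> simp [h, hy]
  have hX' : μ[X | m] =ᵐ[μ] μ[Z₁ * Y | m] + μ[Z₀ | m] - μ[Z₀ * Y | m] := by
    have : X =ᵐ[μ] Z₁ * Y + Z₀ - Z₀ * Y := by
      filter_upwards [hX] with ω h
      simp only [h, Pi.add_apply, Pi.sub_apply, Pi.mul_apply, Pi.one_apply]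
      ring
    exact (condExp_congr_ae this).trans <| (condExp_sub (hZ₁Y.add hZ₀) hZ₀Y m).trans <|
      (condExp_add hZ₁Y hZ₀ m).sub .rfl
  filter_upwards [hXY, hX', h₁, h₀] with ω hXY hX' h₁ h₀
  simp only [condCov, Pi.add_apply, Pi.sub_apply, Pi.mul_apply, Pi.one_apply] at hXY hX' h₁ h₀ ⊢
  rw [hXY, hX', h₁, h₀]
  ring

variable [StandardBorelSpace Ω] [IsFiniteMeasure μ] {hm : m ≤ mΩ}

theorem condExp_mul_ae_eq_of_condIndepFun_s2 (hXm : Measurable X) (hYm : Measurable Y)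
    (hX : ∀ ω, X ω = 0 ∨ X ω = 1) (hY : ∀ ω, Y ω = 0 ∨ Y ω = 1)
    (h : CondIndepFun m hm X Y μ) :
    μ[X * Y | m] =ᵐ[μ] μ[X | m] * μ[Y | m] := by
  have hXY : X * Y = (X ⁻¹' {1} ∩ Y ⁻¹' {1}).indicator fun _ => 1 := by
    ext ω
    rcases hX ω with h₁ | h₁ <;> rcases hY ω with h₂ | h₂ <;> simp [h₁, h₂]
  calc μ[X * Y | m] = μ⟦X ⁻¹' {1} ∩ Y ⁻¹' {1} | m⟧ := by rw [hXY]
    _ =ᵐ[μ] fun ω => (μ⟦X ⁻¹' {1} | m⟧) ω * (μ⟦Y ⁻¹' {1} | m⟧) ω :=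
      (condIndepFun_iff_condExp_inter_preimage_eq_mul hXm hYm).1 h _ _
        (measurableSet_singleton 1) (measurableSet_singleton 1)
    _ = μ[X | m] * μ[Y | m] := by
      rw [← eq_indicator_preimage_one hX, ← eq_indicator_preimage_one hY]
      rfl

theorem ProbabilityTheory.CondIndepFun.condExp_sup_comap_ae_eq {β : Type*} [MeasurableSpace β]
    {Z : Ω → β} (h : CondIndepFun m hm Z Y μ) (hZm : Measurable Z) (hYm : Measurable Y)
    (hY : ∀ ω, Y ω = 0 ∨ Y ω = 1) :
    μ[Y | m ⊔ MeasurableSpace.comap Z inferInstance] =ᵐ[μ] μ[Y | m] := by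
  rw [eq_indicator_preimage_one hY]
  exact CondIndep.condExp_sup_indicator_ae_eq hZm.comap_le hYm.comap_le
    ((condIndepFun_iff_condIndep m hm Z Y μ).1 h) ⟨{1}, measurableSet_singleton 1, rfl⟩

theorem condExp_mul_mul_ae_eq_of_condIndepFun (hmm' : m ≤ m') (hm' : m' ≤ mΩ) {F : Ω → ℝ}
    (hF : StronglyMeasurable[m'] F) {c : ℝ} (hFc : ∀ᵐ ω ∂μ, ‖F ω‖ ≤ c) (hXm : Measurable X)
    (hYm : Measurable Y) (hX : ∀ ω, X ω = 0 ∨ X ω = 1) (hY : ∀ ω, Y ω = 0 ∨ Y ω = 1)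
    (hXY : CondIndepFun m' hm' X Y μ) (hY_cond : μ[Y | m'] =ᵐ[μ] μ[Y | m]) :
    μ[F * X * Y | m] =ᵐ[μ] μ[F * X | m] * μ[Y | m] := by
  have hXi : Integrable X μ := integrable_of_eq_zero_or_eq_one hXm hX
  have hY_bdd : ∀ᵐ ω ∂μ, ‖(μ[Y | m]) ω‖ ≤ 1 :=
    ae_bdd_abs_condExp_of_ae_bdd_abs (ae_of_all μ (norm_le_one_of_eq_zero_or_eq_one_s2 hY))
  have h_m' : μ[F * X * Y | m'] =ᵐ[μ] μ[Y | m] * μ[F * X | m'] := by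
    filter_upwards [condExp_stronglyMeasurable_mul_of_bound hm' hF
        (hXi.mul_of_eq_zero_or_eq_one hYm hY) c hFc,
      condExp_stronglyMeasurable_mul_of_bound hm' hF hXi c hFc,
      condExp_mul_ae_eq_of_condIndepFun_s2 hXm hYm hX hY hXY, hY_cond] with ω hFXY hFX hXY hYω
    simp only [mul_assoc, Pi.mul_apply] at hFXY hFX hXY ⊢
    rw [hFXY, hFX, hXY, hYω]
    ring
  calc μ[F * X * Y | m] =ᵐ[μ] μ[μ[F * X * Y | m'] | m] := (condExp_condExp_of_le hmm' hm').symm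
    _ =ᵐ[μ] μ[μ[Y | m] * μ[F * X | m'] | m] := condExp_congr_ae h_m'
    _ =ᵐ[μ] μ[Y | m] * μ[μ[F * X | m'] | m] :=
      condExp_stronglyMeasurable_mul_of_bound (hmm'.trans hm') stronglyMeasurable_condExp
        integrable_condExp 1 hY_bdd
    _ =ᵐ[μ] μ[Y | m] * μ[F * X | m] := (condExp_condExp_of_le hmm' hm').mul_left
    _ = μ[F * X | m] * μ[Y | m] := mul_comm _ _

end ZeroOneValued

theorem stmt2_general {Ω : Type*} [mΩ : MeasurableSpace Ω] [StandardBorelSpace Ω]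
    (μ : Measure Ω) [IsProbabilityMeasure μ]
    (Yi0 Yi1 Yj0 Ys1 Ys0 : Ω → ℝ)
    (hYi0 : Measurable Yi0) (hYj0 : Measurable Yj0)
    (hYs1 : Measurable Ys1) (hYs0 : Measurable Ys0)
    (hYi0b : ∀ ω, Yi0 ω = 0 ∨ Yi0 ω = 1)
    (hYj0b : ∀ ω, Yj0 ω = 0 ∨ Yj0 ω = 1)
    (hYs1b : ∀ ω, Ys1 ω = 0 ∨ Ys1 ω = 1)
    (hYs0b : ∀ ω, Ys0 ω = 0 ∨ Ys0 ω = 1)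
    (G : MeasurableSpace Ω) (hG : G ≤ mΩ)
    -- (a) consistency relations
    (hcons1 : ∀ᵐ ω ∂μ, Yi1 ω * Yj0 ω = Ys1 ω * Yj0 ω)
    (hcons0 : ∀ᵐ ω ∂μ, Yi1 ω * (1 - Yj0 ω) = Ys0 ω * (1 - Yj0 ω))
    -- (b) irreversibility
    (hirr : ∀ᵐ ω ∂μ, Yi1 ω * (1 - Yi0 ω) = Yi1 ω)
    -- (c) `Y_{i,0}` and `Y_{j,0}` conditionally independent given 𝒢
    (hci0 : CondIndepFun G hG Yi0 Yj0 μ)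
    -- (d) counterfactuals conditionally independent of `Y_{j,0}`
    --     given the σ-algebra generated by 𝒢 and `Y_{i,0}`
    (hle : G ⊔ MeasurableSpace.comap Yi0 inferInstance ≤ mΩ)
    (hciY : CondIndepFun (G ⊔ MeasurableSpace.comap Yi0 inferInstance) hle
      (fun ω => (Ys1 ω, Ys0 ω)) Yj0 μ) :
    ∀ᵐ ω ∂μ,
      (μ[fun ω' => (Ys1 ω' - Ys0 ω') * (if Yi0 ω' = 0 then (1 : ℝ) else 0) | G]) ω
          * ((μ[Yj0 | G]) ω * (1 - (μ[Yj0 | G]) ω))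
        = condCov μ G Yi1 Yj0 ω := by
  set F : Ω → ℝ := fun ω => 1 - Yi0 ω
  have hF : ∀ ω, F ω = 0 ∨ F ω = 1 := fun ω => by rcases hYi0b ω with h | h <;> simp [F, h]
  have hFH : StronglyMeasurable[G ⊔ MeasurableSpace.comap Yi0 inferInstance] F :=
    (measurable_const.sub ((comap_measurable Yi0).mono le_sup_right le_rfl)).stronglyMeasurable
  have hFZ : ∀ {Z : Ω → ℝ}, Measurable[mΩ] Z → (∀ ω, Z ω = 0 ∨ Z ω = 1) →
      Integrable (F * Z) μ := fun hZm hZ =>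
    (integrable_of_eq_zero_or_eq_one (measurable_const.sub hYi0) hF).mul_of_eq_zero_or_eq_one
      hZm hZ
  have hμj : μ[Yj0 | G ⊔ MeasurableSpace.comap Yi0 inferInstance] =ᵐ[μ] μ[Yj0 | G] :=
    hci0.condExp_sup_comap_ae_eq hYi0 hYj0 hYj0b
  have hfac : ∀ {Z : Ω → ℝ}, Measurable[mΩ] Z → (∀ ω, Z ω = 0 ∨ Z ω = 1) →
      CondIndepFun _ hle Z Yj0 μ → μ[F * Z * Yj0 | G] =ᵐ[μ] μ[F * Z | G] * μ[Yj0 | G] :=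
    fun hZm hZ hZY => condExp_mul_mul_ae_eq_of_condIndepFun le_sup_left hle hFH
      (ae_of_all μ (norm_le_one_of_eq_zero_or_eq_one_s2 hF)) hZm hYj0 hZ hYj0b hZY hμj
  have hYi1 : Yi1 =ᵐ[μ] F * Ys1 * Yj0 + F * Ys0 * (1 - Yj0) := by
    filter_upwards [hcons1, hcons0, hirr] with ω hc1 hc0 hi
    simp only [F, Pi.mul_apply, Pi.add_apply, Pi.sub_apply, Pi.one_apply]
    linear_combination (1 - Yi0 ω) * hc1 + (1 - Yi0 ω) * hc0 - hi
  have hlhs : (fun ω => (Ys1 ω - Ys0 ω) * (if Yi0 ω = 0 then (1 : ℝ) else 0))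
      = F * Ys1 - F * Ys0 := by
    ext ω
    rcases hYi0b ω with h | h <;> simp [F, h]
  filter_upwards [condCov_ae_eq_of_ae_eq_mul_add_mul hYj0 hYj0b (hFZ hYs1 hYs1b)
      (hFZ hYs0 hYs0b) hYi1 (hfac hYs1 hYs1b (hciY.comp measurable_fst measurable_id))
      (hfac hYs0 hYs0b (hciY.comp measurable_snd measurable_id)),
    condExp_sub (hFZ hYs1 hYs1b) (hFZ hYs0 hYs0b) G] with ω hcov hsub
  rw [hlhs, hsub, hcov]
  rfl

/-- (edge-level identification identity, proof of Lemma 2.1(B) of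
He–Song, "Measuring Diffusion over a Large Network"), for the average spillover effect
on the untreated (conditional on `Y_{i,0} = 0`) under irreversible state changes:
a.s. `E[(Y*_{ij}(1) − Y*_{ij}(0))·1{Y_{i,0} = 0} | 𝒢] · μ_{j,0}(1 − μ_{j,0})
      = Cov(Y_{i,1}, Y_{j,0} | 𝒢)`. -/
theorem stmt2 {Ω : Type*} [mΩ : MeasurableSpace Ω] [StandardBorelSpace Ω]
    (μ : Measure Ω) [IsProbabilityMeasure μ]
    (Yi0 Yi1 Yj0 Ys1 Ys0 : Ω → ℝ)
    (hYi0 : Measurable Yi0) (hYi1 : Measurable Yi1) (hYj0 : Measurable Yj0)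
    (hYs1 : Measurable Ys1) (hYs0 : Measurable Ys0)
    (hYi0b : ∀ ω, Yi0 ω = 0 ∨ Yi0 ω = 1)
    (hYi1b : ∀ ω, Yi1 ω = 0 ∨ Yi1 ω = 1)
    (hYj0b : ∀ ω, Yj0 ω = 0 ∨ Yj0 ω = 1)
    (hYs1b : ∀ ω, Ys1 ω = 0 ∨ Ys1 ω = 1)
    (hYs0b : ∀ ω, Ys0 ω = 0 ∨ Ys0 ω = 1)
    (G : MeasurableSpace Ω) (hG : G ≤ mΩ)
    -- (a) consistency relations
    (hcons1 : ∀ᵐ ω ∂μ, Yi1 ω * Yj0 ω = Ys1 ω * Yj0 ω)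
    (hcons0 : ∀ᵐ ω ∂μ, Yi1 ω * (1 - Yj0 ω) = Ys0 ω * (1 - Yj0 ω))
    -- (b) irreversibility
    (hirr : ∀ᵐ ω ∂μ, Yi1 ω * (1 - Yi0 ω) = Yi1 ω)
    -- (c) `Y_{i,0}` and `Y_{j,0}` conditionally independent given 𝒢
    (hci0 : CondIndepFun G hG Yi0 Yj0 μ)
    -- (d) counterfactuals conditionally independent of `Y_{j,0}`
    --     given the σ-algebra generated by 𝒢 and `Y_{i,0}`
    (hle : G ⊔ MeasurableSpace.comap Yi0 inferInstance ≤ mΩ)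
    (hciY : CondIndepFun (G ⊔ MeasurableSpace.comap Yi0 inferInstance) hle
      (fun ω => (Ys1 ω, Ys0 ω)) Yj0 μ) :
    ∀ᵐ ω ∂μ,
      (μ[fun ω' => (Ys1 ω' - Ys0 ω') * (if Yi0 ω' = 0 then (1 : ℝ) else 0) | G]) ω
          * ((μ[Yj0 | G]) ω * (1 - (μ[Yj0 | G]) ω))
        = condCov μ G Yi1 Yj0 ω :=
  stmt2_general (mΩ := mΩ) μ Yi0 Yi1 Yj0 Ys1 Ys0 hYi0 hYj0 hYs1 hYs0 hYi0b hYj0b hYs1b hYs0b G hG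
    hcons1 hcons0 hirr hci0 hle hciY
end

section
/- Let N be a finite set of n units, ℋ a sub-σ-algebra, and let G∘ = (N, E∘) (the true causal graph) and G = (N, E_G) (the proxy graph) be directed graphs without self-loops, with in-neighborhoods N∘(i) and N_G(i). Suppose Y_{j,0}, Y_{i,1} are {0,1}-valued random variables, and for each ij ∈ E∘ there are {0,1}-valued random variables Y*_{ij}(1), Y*_{ij}(0) satisfying Y_{i,1}·Y_{j,0} = Y*_{ij}(1)·Y_{j,0} and Y_{i,1}·(1−Y_{j,0}) = Y*_{ij}(0)·(1−Y_{j,0}) almost surely, with (Y*_{ij}(1), Y*_{ij}(0)) conditionally independent of Y_{j,0} given ℋ. Assume further: (a) for every ij ∈ E_G \ E∘, Cov(Y_{i,1}, Y_{j,0} | ℋ) = 0 almost surely; (b) (nonnegative spillover) for every j ∈ N, Σ_{i: ij ∈ E∘\E_G} (Y*_{ij}(1) − Y*_{ij}(0)) ≥ 0 almost surely; (c) v² = (1/n)Σ_{j∈N} μ_{j,0}(1−μ_{j,0}) > 0 almost surely, where μ_{j,0} = E[Y_{j,0}|ℋ]. Then, almost surely, D ≥ C_G, where D = Σ_{j∈N}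 w_j Σ_{i: ij∈E∘} E[Y*_{ij}(1) − Y*_{ij}(0) | ℋ] with weights w_j = μ_{j,0}(1−μ_{j,0})/(n v²), and C_G = (1/(n v²)) Σ_{ij∈E_G} Cov(Y_{i,1}, Y_{j,0} | ℋ). -/
open MeasureTheory ProbabilityTheory

section ConditionalExpectation

variable {Ω : Type*} {m mΩ : MeasurableSpace Ω} {μ : Measure Ω}

lemma integrable_of_zero_or_one [IsFiniteMeasure μ] {X : Ω → ℝ} (hX : Measurable X)
    (hX01 : ∀ ω, X ω = 0 ∨ X ω = 1) : Integrable X μ :=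
  .of_bound hX.aestronglyMeasurable 1 <| ae_of_all _ fun ω => by
    rcases hX01 ω with h | h <;> simp [h]

lemma eq_indicator_preimage_one_of_zero_or_one {X : Ω → ℝ} (hX01 : ∀ ω, X ω = 0 ∨ X ω = 1) :
    X = (X ⁻¹' {1}).indicator fun _ => 1 :=
  funext fun ω => by rcases hX01 ω with h | h <;> simp [h]

lemma condExp_mul_eq_of_condIndepFun_of_zero_or_one [StandardBorelSpace Ω] [IsFiniteMeasure μ]
    {hm : m ≤ mΩ} {X Y : Ω → ℝ} (hX : Measurable X) (hY : Measurable Y)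
    (hX01 : ∀ ω, X ω = 0 ∨ X ω = 1) (hY01 : ∀ ω, Y ω = 0 ∨ Y ω = 1)
    (hind : CondIndepFun m hm X Y μ) :
    μ[X * Y | m] =ᵐ[μ] μ[X | m] * μ[Y | m] := by
  have hXY : X * Y = (X ⁻¹' {1} ∩ Y ⁻¹' {1}).indicator fun _ => 1 := funext fun ω => by
    rcases hX01 ω with h | h <;> rcases hY01 ω with h' | h' <;> simp [h, h']
  rw [hXY]
  conv_rhs => rw [eq_indicator_preimage_one_of_zero_or_one hX01,
    eq_indicator_preimage_one_of_zero_or_one hY01]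
  exact (condIndepFun_iff_condExp_inter_preimage_eq_mul hX hY).1 hind _ _
    (measurableSet_singleton 1) (measurableSet_singleton 1)

lemma ae_condExp_mem_Icc_of_zero_or_one [IsFiniteMeasure μ] (hm : m ≤ mΩ) {X : Ω → ℝ}
    (hX : Measurable X) (hX01 : ∀ ω, X ω = 0 ∨ X ω = 1) :
    ∀ᵐ ω ∂μ, μ[X | m] ω ∈ Set.Icc 0 1 := by
  have hle : X ≤ᵐ[μ] fun _ => 1 := ae_of_all _ fun ω => by rcases hX01 ω with h | h <;> simp [h]
  have hupper := condExp_mono (m := m) (integrable_of_zero_or_one hX hX01)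
    (integrable_const (1 : ℝ)) hle
  rw [condExp_const hm] at hupper
  have hnonneg : 0 ≤ᵐ[μ] X := ae_of_all _ fun ω => by rcases hX01 ω with h | h <;> simp [h]
  filter_upwards [condExp_nonneg (m := m) hnonneg, hupper] with ω h0 h1
  exact ⟨h0, h1⟩

lemma ae_nonneg_sum_condExp {ι : Type*} {s : Finset ι} {f : ι → Ω → ℝ}
    (hf : ∀ i ∈ s, Integrable (f i) μ) (h : ∀ᵐ ω ∂μ, 0 ≤ ∑ i ∈ s, f i ω) :
    ∀ᵐ ω ∂μ, 0 ≤ ∑ i ∈ s, μ[f i | m] ω := by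
  have hsum : 0 ≤ᵐ[μ] ∑ i ∈ s, f i := by
    filter_upwards [h] with ω hω
    simpa only [Pi.zero_apply, Finset.sum_apply] using hω
  filter_upwards [condExp_nonneg (m := m) hsum, condExp_finsetSum hf m] with ω h0 hω
  simpa only [hω, Pi.zero_apply, Finset.sum_apply] using h0

lemma condCov_ae_eq_condVar_mul_condExp_sub [StandardBorelSpace Ω] [IsFiniteMeasure μ]
    {hm : m ≤ mΩ}
    {Y₀ Y₁ Y₁' Y₀' : Ω → ℝ} (hY₀ : Measurable Y₀) (hY₁' : Measurable Y₁')
    (hY₀' : Measurable Y₀') (hY₀01 : ∀ ω, Y₀ ω = 0 ∨ Y₀ ω = 1)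
    (hY₁'01 : ∀ ω, Y₁' ω = 0 ∨ Y₁' ω = 1) (hY₀'01 : ∀ ω, Y₀' ω = 0 ∨ Y₀' ω = 1)
    (hcons₁ : ∀ᵐ ω ∂μ, Y₁ ω * Y₀ ω = Y₁' ω * Y₀ ω)
    (hcons₀ : ∀ᵐ ω ∂μ, Y₁ ω * (1 - Y₀ ω) = Y₀' ω * (1 - Y₀ ω))
    (hind : CondIndepFun m hm (fun ω => (Y₁' ω, Y₀' ω)) Y₀ μ) :
    condCov μ m Y₁ Y₀ =ᵐ[μ] fun ω =>
      μ[Y₀ | m] ω * (1 - μ[Y₀ | m] ω) * μ[fun ω' => Y₁' ω' - Y₀' ω' | m] ω := by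
  have hint₁' := integrable_of_zero_or_one (μ := μ) hY₁' hY₁'01
  have hint₀' := integrable_of_zero_or_one (μ := μ) hY₀' hY₀'01
  have hmul₁ : μ[Y₁' * Y₀ | m] =ᵐ[μ] μ[Y₁' | m] * μ[Y₀ | m] :=
    condExp_mul_eq_of_condIndepFun_of_zero_or_one hY₁' hY₀ hY₁'01 hY₀01
      (hind.comp measurable_fst measurable_id)
  have hmul₀ : μ[Y₀' * Y₀ | m] =ᵐ[μ] μ[Y₀' | m] * μ[Y₀ | m] :=
    condExp_mul_eq_of_condIndepFun_of_zero_or_one hY₀' hY₀ hY₀'01 hY₀01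
      (hind.comp measurable_snd measurable_id)
  have hY₁ : Y₁ =ᵐ[μ] Y₁' * Y₀ + (Y₀' - Y₀' * Y₀) := by
    filter_upwards [hcons₁, hcons₀] with ω h₁ h₀
    simp only [Pi.add_apply, Pi.sub_apply, Pi.mul_apply]
    linear_combination h₁ + h₀
  have hbdd : ∀ᵐ ω ∂μ, ‖Y₀ ω‖ ≤ 1 := ae_of_all _ fun ω => by
    rcases hY₀01 ω with h | h <;> simp [h]
  have hint_mul : ∀ {Z : Ω → ℝ}, Integrable Z μ → Integrable (Z * Y₀) μ := fun hZ => by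
    rw [mul_comm]
    exact hZ.bdd_mul hY₀.aestronglyMeasurable hbdd
  have hcondY₁ := (condExp_congr_ae (m := m) hY₁).trans <|
    (condExp_add (hint_mul hint₁') (hint₀'.sub (hint_mul hint₀')) m).trans <|
      .add hmul₁ <| (condExp_sub hint₀' (hint_mul hint₀') m).trans <| .sub .rfl hmul₀
  have hcondY₁Y₀ : μ[fun ω => Y₁ ω * Y₀ ω | m] =ᵐ[μ] μ[Y₁' * Y₀ | m] :=
    condExp_congr_ae hcons₁
  filter_upwards [hcondY₁Y₀, hmul₁, hcondY₁, condExp_sub hint₁' hint₀' m] with ω h₁ h₂ h₃ h₄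
  simp only [Pi.add_apply, Pi.sub_apply, Pi.mul_apply] at h₂ h₃ h₄
  simp only [condCov, h₁, h₂, h₃]
  rw [show (fun ω' => Y₁' ω' - Y₀' ω') = Y₁' - Y₀' from rfl, h₄]
  ring

end ConditionalExpectation

lemma sum_pairs_eq_sum_sum_filter {N : Type*} [Fintype N] [DecidableEq N]
    (S : Finset (N × N)) (f : N → N → ℝ) :
    ∑ p ∈ S, f p.1 p.2 = ∑ j, ∑ i ∈ Finset.univ.filter (fun i => (i, j) ∈ S), f i j :=
  Finset.sum_finset_product_right' S _ _ fun p => by simp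

lemma sum_proxy_le_sum_mul_sum_causal {N : Type*} [Fintype N] [DecidableEq N]
    (E₀ EG : Finset (N × N)) (q : N → ℝ) (d : N → N → ℝ) (c : N × N → ℝ)
    (hq : ∀ j, 0 ≤ q j) (hc : ∀ p ∈ E₀, c p = q p.2 * d p.1 p.2)
    (hc_zero : ∀ p ∈ EG \ E₀, c p = 0)
    (hd : ∀ j, 0 ≤ ∑ i ∈ Finset.univ.filter (fun i => (i, j) ∈ E₀ \ EG), d i j) :
    ∑ p ∈ EG, c p ≤ ∑ j, q j * ∑ i ∈ Finset.univ.filter (fun i => (i, j) ∈ E₀), d i j := by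
  have hsum : ∀ S ⊆ E₀, ∑ p ∈ S, c p
      = ∑ j, q j * ∑ i ∈ Finset.univ.filter (fun i => (i, j) ∈ S), d i j := fun S hS => by
    simp only [Finset.sum_congr rfl fun p hp => hc p (hS hp), Finset.mul_sum]
    exact sum_pairs_eq_sum_sum_filter S fun i j => q j * d i j
  have hmissed : 0 ≤ ∑ p ∈ E₀ \ EG, c p := by
    rw [hsum _ Finset.sdiff_subset]
    exact Finset.sum_nonneg fun j _ => mul_nonneg (hq j) (hd j)
  calc ∑ p ∈ EG, c p = ∑ p ∈ E₀ ∩ EG, c p := by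
        rw [← Finset.sum_inter_add_sum_sdiff EG E₀, Finset.sum_eq_zero hc_zero, add_zero,
          Finset.inter_comm]
    _ ≤ ∑ p ∈ E₀ ∩ EG, c p + ∑ p ∈ E₀ \ EG, c p := le_add_of_nonneg_right hmissed
    _ = ∑ p ∈ E₀, c p := Finset.sum_inter_add_sum_sdiff E₀ EG c
    _ = _ := hsum E₀ subset_rfl

theorem stmt4_general {Ω : Type*} [mΩ : MeasurableSpace Ω] [StandardBorelSpace Ω]
    (μ : Measure Ω) [IsProbabilityMeasure μ]
    {N : Type*} [Fintype N] [DecidableEq N]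
    (E0 EG : Finset (N × N))
    (Y0 Y1 : N → Ω → ℝ) (Ys1 Ys0 : N → N → Ω → ℝ)
    (hY0m : ∀ j, Measurable (Y0 j))
    (hYs1m : ∀ i j, (i, j) ∈ E0 → Measurable (Ys1 i j))
    (hYs0m : ∀ i j, (i, j) ∈ E0 → Measurable (Ys0 i j))
    (hY0b : ∀ j ω, Y0 j ω = 0 ∨ Y0 j ω = 1)
    (hYs1b : ∀ i j, (i, j) ∈ E0 → ∀ ω, Ys1 i j ω = 0 ∨ Ys1 i j ω = 1)
    (hYs0b : ∀ i j, (i, j) ∈ E0 → ∀ ω, Ys0 i j ω = 0 ∨ Ys0 i j ω = 1)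
    (H : MeasurableSpace Ω) (hH : H ≤ mΩ)
    -- consistency relations along causal edges
    (hcons1 : ∀ i j, (i, j) ∈ E0 →
      ∀ᵐ ω ∂μ, Y1 i ω * Y0 j ω = Ys1 i j ω * Y0 j ω)
    (hcons0 : ∀ i j, (i, j) ∈ E0 →
      ∀ᵐ ω ∂μ, Y1 i ω * (1 - Y0 j ω) = Ys0 i j ω * (1 - Y0 j ω))
    -- unconfoundedness along causal edges
    (hindep : ∀ i j, (i, j) ∈ E0 →
      CondIndepFun H hH (fun ω => (Ys1 i j ω, Ys0 i j ω)) (Y0 j) μ)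
    -- (a) vanishing covariance along non-causal proxy edges
    (hzero : ∀ i j, (i, j) ∈ EG \ E0 →
      condCov μ H (Y1 i) (Y0 j) =ᵐ[μ] 0)
    -- (b) nonnegative spillover on the missed causal edges
    (hmono : ∀ j : N, ∀ᵐ ω ∂μ,
      0 ≤ ∑ i ∈ Finset.univ.filter (fun i => (i, j) ∈ E0 \ EG),
            (Ys1 i j ω - Ys0 i j ω)) :
    ∀ᵐ ω ∂μ,
      -- C_G ≤ D
      (1 / ((Fintype.card N : ℝ) *
            ((1 / (Fintype.card N : ℝ)) *
              ∑ l, (μ[Y0 l | H]) ω * (1 - (μ[Y0 l | H]) ω))))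
          * ∑ e ∈ EG, condCov μ H (Y1 e.1) (Y0 e.2) ω
        ≤ ∑ j, ((μ[Y0 j | H]) ω * (1 - (μ[Y0 j | H]) ω)
              / ((Fintype.card N : ℝ) *
                  ((1 / (Fintype.card N : ℝ)) *
                    ∑ l, (μ[Y0 l | H]) ω * (1 - (μ[Y0 l | H]) ω))))
            * ∑ i ∈ Finset.univ.filter (fun i => (i, j) ∈ E0),
                (μ[fun ω' => Ys1 i j ω' - Ys0 i j ω' | H]) ω := by
  have hcov : ∀ p ∈ E0, condCov μ H (Y1 p.1) (Y0 p.2) =ᵐ[μ] fun ω =>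
      μ[Y0 p.2 | H] ω * (1 - μ[Y0 p.2 | H] ω) *
        μ[fun ω' => Ys1 p.1 p.2 ω' - Ys0 p.1 p.2 ω' | H] ω := fun p hp =>
    condCov_ae_eq_condVar_mul_condExp_sub (hY0m _) (hYs1m _ _ hp) (hYs0m _ _ hp) (hY0b _)
      (hYs1b _ _ hp) (hYs0b _ _ hp) (hcons1 _ _ hp) (hcons0 _ _ hp) (hindep _ _ hp)
  have hspill : ∀ j, ∀ᵐ ω ∂μ, 0 ≤ ∑ i ∈ Finset.univ.filter (fun i => (i, j) ∈ E0 \ EG),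
      μ[fun ω' => Ys1 i j ω' - Ys0 i j ω' | H] ω := fun j =>
    ae_nonneg_sum_condExp (fun i hi => by
      have hp := (Finset.mem_sdiff.1 (Finset.mem_filter.1 hi).2).1
      exact (integrable_of_zero_or_one (hYs1m _ _ hp) (hYs1b _ _ hp)).sub
        (integrable_of_zero_or_one (hYs0m _ _ hp) (hYs0b _ _ hp))) (hmono j)
  filter_upwards [(Filter.eventually_all_finset E0).2 hcov,
    (Filter.eventually_all_finset (EG \ E0)).2 fun p hp => hzero p.1 p.2 hp,
    Filter.eventually_all.2 hspill,
    Filter.eventually_all.2 fun j => ae_condExp_mem_Icc_of_zero_or_one hH (hY0m j) (hY0b j)]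
    with ω hcovω hzeroω hspillω hmeanω
  have hvar : ∀ j, 0 ≤ μ[Y0 j | H] ω * (1 - μ[Y0 j | H] ω) := fun j =>
    mul_nonneg (hmeanω j).1 (sub_nonneg.2 (hmeanω j).2)
  have hnv2 : 0 ≤ (Fintype.card N : ℝ) * ((1 / (Fintype.card N : ℝ)) *
      ∑ l, μ[Y0 l | H] ω * (1 - μ[Y0 l | H] ω)) := by
    have := Finset.sum_nonneg fun l (_ : l ∈ Finset.univ) => hvar l
    positivity
  calc _ ≤ _ := mul_le_mul_of_nonneg_left
        (sum_proxy_le_sum_mul_sum_causal E0 EG _ _ _ hvar hcovω hzeroω hspillω)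
        (one_div_nonneg.2 hnv2)
    _ = _ := by
      rw [Finset.mul_sum]
      exact Finset.sum_congr rfl fun j _ => by ring

/-- first inequality of Lemma 2.2 of He–Song, "Measuring Diffusion over a
Large Network".  When the true causal graph `G∘ = (N, E∘)` is latent and only a proxy
graph `G = (N, E_G)` is observed, under the unconfoundedness condition, the requirement
that covariances vanish along proxy edges that are not causal edges, and the nonnegative
spillover condition, the observable covariance measure `C_G` is a lower bound for the
diffusion `D` almost surely.  An edge `(i, j)` represents a causal link from `Y_{j,0}`
to `Y_{i,1}`, so in-neighborhoods are `N∘(i) = {j : (i,j) ∈ E∘}`, `N_G(i) = {j : (i,j) ∈ E_G}`. -/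
theorem stmt4 {Ω : Type*} [mΩ : MeasurableSpace Ω] [StandardBorelSpace Ω]
    (μ : Measure Ω) [IsProbabilityMeasure μ]
    {N : Type*} [Fintype N] [DecidableEq N]
    (E0 EG : Finset (N × N)) (hE0 : ∀ e ∈ E0, e.1 ≠ e.2) (hEG : ∀ e ∈ EG, e.1 ≠ e.2)
    (Y0 Y1 : N → Ω → ℝ) (Ys1 Ys0 : N → N → Ω → ℝ)
    (hY0m : ∀ j, Measurable (Y0 j)) (hY1m : ∀ i, Measurable (Y1 i))
    (hYs1m : ∀ i j, (i, j) ∈ E0 → Measurable (Ys1 i j))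
    (hYs0m : ∀ i j, (i, j) ∈ E0 → Measurable (Ys0 i j))
    (hY0b : ∀ j ω, Y0 j ω = 0 ∨ Y0 j ω = 1)
    (hY1b : ∀ i ω, Y1 i ω = 0 ∨ Y1 i ω = 1)
    (hYs1b : ∀ i j, (i, j) ∈ E0 → ∀ ω, Ys1 i j ω = 0 ∨ Ys1 i j ω = 1)
    (hYs0b : ∀ i j, (i, j) ∈ E0 → ∀ ω, Ys0 i j ω = 0 ∨ Ys0 i j ω = 1)
    (H : MeasurableSpace Ω) (hH : H ≤ mΩ)
    -- consistency relations along causal edges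
    (hcons1 : ∀ i j, (i, j) ∈ E0 →
      ∀ᵐ ω ∂μ, Y1 i ω * Y0 j ω = Ys1 i j ω * Y0 j ω)
    (hcons0 : ∀ i j, (i, j) ∈ E0 →
      ∀ᵐ ω ∂μ, Y1 i ω * (1 - Y0 j ω) = Ys0 i j ω * (1 - Y0 j ω))
    -- unconfoundedness along causal edges
    (hindep : ∀ i j, (i, j) ∈ E0 →
      CondIndepFun H hH (fun ω => (Ys1 i j ω, Ys0 i j ω)) (Y0 j) μ)
    -- (a) vanishing covariance along non-causal proxy edges
    (hzero : ∀ i j, (i, j) ∈ EG \ E0 →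
      condCov μ H (Y1 i) (Y0 j) =ᵐ[μ] 0)
    -- (b) nonnegative spillover on the missed causal edges
    (hmono : ∀ j : N, ∀ᵐ ω ∂μ,
      0 ≤ ∑ i ∈ Finset.univ.filter (fun i => (i, j) ∈ E0 \ EG),
            (Ys1 i j ω - Ys0 i j ω))
    -- (c) the aggregated overlap condition `v² > 0` a.s.
    (hv : ∀ᵐ ω ∂μ,
      0 < (1 / (Fintype.card N : ℝ)) *
            ∑ j, (μ[Y0 j | H]) ω * (1 - (μ[Y0 j | H]) ω)) :
    ∀ᵐ ω ∂μ,
      -- C_G ≤ D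
      (1 / ((Fintype.card N : ℝ) *
            ((1 / (Fintype.card N : ℝ)) *
              ∑ l, (μ[Y0 l | H]) ω * (1 - (μ[Y0 l | H]) ω))))
          * ∑ e ∈ EG, condCov μ H (Y1 e.1) (Y0 e.2) ω
        ≤ ∑ j, ((μ[Y0 j | H]) ω * (1 - (μ[Y0 j | H]) ω)
              / ((Fintype.card N : ℝ) *
                  ((1 / (Fintype.card N : ℝ)) *
                    ∑ l, (μ[Y0 l | H]) ω * (1 - (μ[Y0 l | H]) ω))))
            * ∑ i ∈ Finset.univ.filter (fun i => (i, j) ∈ E0),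
                (μ[fun ω' => Ys1 i j ω' - Ys0 i j ω' | H]) ω :=
  stmt4_general (mΩ := mΩ) μ E0 EG Y0 Y1 Ys1 Ys0 hY0m hYs1m hYs0m hY0b hYs1b hYs0b H hH hcons1
    hcons0 hindep hzero hmono
end

section
/- Let N be a finite set of n units, ℋ a sub-σ-algebra, and let G∘ = (N, E∘) and G = (N, E_G) be directed graphs without self-loops. Suppose Y_{j,0}, Y_{j,1} are {0,1}-valued random variables with the irreversibility property Y_{i,1}·(1−Y_{i,0}) = Y_{i,1} almost surely for all i, and for each ij ∈ E∘ there are {0,1}-valued random variables Y*_{ij}(1), Y*_{ij}(0) satisfying: Y_{i,1}·Y_{j,0} = Y*_{ij}(1)·Y_{j,0} and Y_{i,1}·(1−Y_{j,0}) = Y*_{ij}(0)·(1−Y_{j,0}) almost surely; Y_{i,0} and Y_{j,0} conditionally independent given ℋ; and (Y*_{ij}(1), Y*_{ij}(0)) conditionally independent of Y_{j,0} given the σ-algebra generated by ℋ and Y_{i,0}. Let μ_{j,0} = E[Y_{j,0}|ℋ], v² = (1/n)Σ_{j∈N} μ_{j,0}(1−μ_{j,0}), and assume v² > 0 and 1 −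 μ_{i,0} > 0 almost surely. Assume further: (a) for every ij ∈ E_G \ E∘, Cov(Y_{i,1}, Y_{j,0} | ℋ) = 0 almost surely; (b) for every j ∈ N, Σ_{i: ij ∈ E∘\E_G} E[(Y*_{ij}(1) − Y*_{ij}(0))·1{Y_{i,0}=0} | ℋ]/(1 − μ_{i,0}) ≥ 0 almost surely. Then, almost surely, D^I ≥ C_G^I, where D^I = Σ_{j∈N} w_j Σ_{i: ij∈E∘} E[(Y*_{ij}(1) − Y*_{ij}(0))·1{Y_{i,0}=0} | ℋ]/(1−μ_{i,0}) with w_j = μ_{j,0}(1−μ_{j,0})/(n v²), and C_G^I = (1/(n v²)) Σ_{ij∈E_G} Cov(Y_{i,1}/(1−μ_{i,0}), Y_{j,0} | ℋ). -/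
/-!
For a causal edge `ij`, irreversibility and the consistency relations give
`Y_{i,1} Y_{j,0} = (1 - Y_{i,0}) Y*_{ij}(1) Y_{j,0}` and
`Y_{i,1} (1 - Y_{j,0}) = (1 - Y_{i,0}) Y*_{ij}(0) (1 - Y_{j,0})`. Conditioning first on
`ℋ ∨ σ(Y_{i,0})`, given which the counterfactuals are independent of `Y_{j,0}` and (because
`Y_{i,0} ⊥ Y_{j,0} | ℋ`) `E[Y_{j,0} | ℋ ∨ σ(Y_{i,0})] = μ_{j,0}`, and then on `ℋ` yields
`Cov(Y_{i,1}, Y_{j,0} | ℋ) = μ_{j,0} (1 - μ_{j,0}) E[(Y*_{ij}(1) - Y*_{ij}(0)) 1{Y_{i,0} = 0} | ℋ]`.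
The `ℋ`-measurable factor `1 / (1 - μ_{i,0})` comes out of the conditional covariance, once one
knows that `Y_{i,1} / (1 - μ_{i,0})` is integrable: it is dominated by
`(1 - Y_{i,0}) / (1 - μ_{i,0})`, whose expectation is `1`. Hence the sum defining `C_G^I`, taken
over `E∘` instead of `E_G`, is `D^I`; edges of `E_G \ E∘` contribute `0` by (a), and edges of
`E∘ \ E_G` contribute a nonnegative amount by (b).
-/

open MeasureTheory ProbabilityTheory

section Binary

variable {Ω : Type*}

def IsBinary (f : Ω → ℝ) : Prop := ∀ ω, f ω = 0 ∨ f ω = 1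

namespace IsBinary

variable {f g : Ω → ℝ}

lemma mul (hf : IsBinary f) (hg : IsBinary g) : IsBinary fun ω => f ω * g ω := fun ω => by
  rcases hf ω with h | h <;> rcases hg ω with h' | h' <;> simp [h, h']

lemma one_sub (hf : IsBinary f) : IsBinary fun ω => 1 - f ω := fun ω => by
  rcases hf ω with h | h <;> simp [h]

lemma indicator_one (s : Set Ω) : IsBinary (s.indicator 1) := fun ω => by
  by_cases h : ω ∈ s <;> simp [h]

lemma nonneg (hf : IsBinary f) (ω : Ω) : 0 ≤ f ω := by
  rcases hf ω with h | h <;> simp [h]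

lemma le_one (hf : IsBinary f) (ω : Ω) : f ω ≤ 1 := by
  rcases hf ω with h | h <;> simp [h]

lemma norm_le_one (hf : IsBinary f) (ω : Ω) : ‖f ω‖ ≤ 1 := by
  rcases hf ω with h | h <;> simp [h]

lemma eq_indicator (hf : IsBinary f) : f = (f ⁻¹' {1}).indicator 1 := by
  funext ω; rcases hf ω with h | h <;> simp [h]

lemma if_eq_zero_eq_one_sub (hf : IsBinary f) (ω : Ω) :
    (if f ω = 0 then (1 : ℝ) else 0) = 1 - f ω := by
  rcases hf ω with h | h <;> simp [h]

variable {m mΩ : MeasurableSpace Ω} {μ : Measure Ω} [IsFiniteMeasure μ]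

lemma integrable (hf : IsBinary f) (hfm : Measurable f) : Integrable f μ :=
  .of_bound hfm.aestronglyMeasurable 1 (ae_of_all _ hf.norm_le_one)

lemma condExp_mem_Icc (hm : m ≤ mΩ) (hf : IsBinary f)
    (hfm : Measurable f) : ∀ᵐ ω ∂μ, μ[f|m] ω ∈ Set.Icc 0 1 := by
  have hle : μ[f|m] ≤ᵐ[μ] μ[fun _ => (1 : ℝ)|m] :=
    condExp_mono (hf.integrable hfm) (integrable_const 1) (ae_of_all _ hf.le_one)
  rw [condExp_const hm] at hle
  filter_upwards [condExp_nonneg (m := m) (ae_of_all μ hf.nonneg), hle] with ω h0 h1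
  exact ⟨h0, h1⟩

end IsBinary

end Binary

lemma MeasurableSpace.sup_eq_generateFrom_image2_inter {Ω : Type*}
    (m₁ m₂ : MeasurableSpace Ω) : m₁ ⊔ m₂ =
      generateFrom (Set.image2 (· ∩ ·) {s | MeasurableSet[m₁] s} {t | MeasurableSet[m₂] t}) := by
  refine le_antisymm (sup_le (fun s hs => ?_) fun t ht => ?_) (generateFrom_le ?_)
  · exact measurableSet_generateFrom ⟨s, hs, Set.univ, .univ, Set.inter_univ s⟩
  · exact measurableSet_generateFrom ⟨Set.univ, .univ, t, ht, Set.univ_inter t⟩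
  · rintro _ ⟨s, hs, t, ht, rfl⟩
    exact (le_sup_left (b := m₂) s hs).inter (le_sup_right (a := m₁) t ht)

lemma isPiSystem_image2_inter_s5 {Ω : Type*} (m₁ m₂ : MeasurableSpace Ω) :
    IsPiSystem (Set.image2 (· ∩ ·) {s | MeasurableSet[m₁] s} {t | MeasurableSet[m₂] t}) := by
  rintro _ ⟨s₁, hs₁, t₁, ht₁, rfl⟩ _ ⟨s₂, hs₂, t₂, ht₂, rfl⟩ -
  exact ⟨s₁ ∩ s₂, hs₁.inter hs₂, t₁ ∩ t₂, ht₁.inter ht₂, Set.inter_inter_inter_comm _ _ _ _⟩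

lemma setIntegral_eq_of_isPiSystem {Ω : Type*} {m mΩ : MeasurableSpace Ω} {μ : Measure Ω}
    (hm : m ≤ mΩ) {S : Set (Set Ω)} (h_eq : m = MeasurableSpace.generateFrom S)
    (h_inter : IsPiSystem S) (h_univ : Set.univ ∈ S) {f g : Ω → ℝ} (hf : Integrable f μ)
    (hg : Integrable g μ) (basic : ∀ t ∈ S, ∫ ω in t, f ω ∂μ = ∫ ω in t, g ω ∂μ) {t : Set Ω}
    (ht : MeasurableSet[m] t) : ∫ ω in t, f ω ∂μ = ∫ ω in t, g ω ∂μ := by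
  induction t, ht using MeasurableSpace.induction_on_inter h_eq h_inter with
  | empty => simp
  | basic t ht => exact basic t ht
  | compl t ht iht =>
    have hf' := integral_add_compl (hm t ht) hf
    have hg' := integral_add_compl (hm t ht) hg
    have huniv := basic _ h_univ
    rw [setIntegral_univ, setIntegral_univ] at huniv
    linarith
  | iUnion u hdisj hu ihu =>
    rw [integral_iUnion (fun i => hm _ (hu i)) hdisj hf.integrableOn,
      integral_iUnion (fun i => hm _ (hu i)) hdisj hg.integrableOn]
    exact tsum_congr ihu

section CondIndep

variable {Ω : Type*} {m mΩ : MeasurableSpace Ω} [StandardBorelSpace Ω] {μ : Measure Ω}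
  [IsFiniteMeasure μ] {hm : m ≤ mΩ}

lemma condExp_mul_of_condIndepFun {X Y : Ω → ℝ} (hX : Measurable X) (hY : Measurable Y)
    (hXb : IsBinary X) (hYb : IsBinary Y) (h : CondIndepFun m hm X Y μ) :
    μ[fun ω => X ω * Y ω|m] =ᵐ[μ] fun ω => μ[X|m] ω * μ[Y|m] ω := by
  have hXY : (fun ω => X ω * Y ω) = (X ⁻¹' {1} ∩ Y ⁻¹' {1}).indicator 1 := by
    rw [Set.inter_indicator_one, ← hXb.eq_indicator, ← hYb.eq_indicator]; rfl
  have key := (condIndepFun_iff_condExp_inter_preimage_eq_mul hX hY).mp h {1} {1}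
    (measurableSet_singleton 1) (measurableSet_singleton 1)
  rwa [← Pi.one_def, ← hXY, ← hXb.eq_indicator, ← hYb.eq_indicator] at key

lemma condExp_sup_comap_eq_of_condIndepFun {β : Type*} [mβ : MeasurableSpace β] {X : Ω → β}
    {Y : Ω → ℝ} (hX : Measurable X) (hY : Measurable Y) (hYb : IsBinary Y)
    (h : CondIndepFun m hm X Y μ) (hle : m ⊔ mβ.comap X ≤ mΩ) :
    μ[Y|m ⊔ mβ.comap X] =ᵐ[μ] μ[Y|m] := by
  have hYi : Integrable Y μ := hYb.integrable hY
  have hEm : StronglyMeasurable[m ⊔ mβ.comap X] (μ[Y|m]) :=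
    stronglyMeasurable_condExp.mono le_sup_left
  refine (ae_eq_condExp_of_forall_setIntegral_eq hle hYi
    (fun _ _ _ => integrable_condExp.integrableOn) (fun t ht _ => ?_)
    hEm.aestronglyMeasurable).symm
  refine setIntegral_eq_of_isPiSystem hle (MeasurableSpace.sup_eq_generateFrom_image2_inter _ _)
    (isPiSystem_image2_inter_s5 _ _)
    ⟨_, @MeasurableSet.univ _ m, _, @MeasurableSet.univ _ (mβ.comap X), Set.univ_inter _⟩
    integrable_condExp hYi ?_ ht
  rintro _ ⟨s, hs, _, ⟨B, hB, rfl⟩, rfl⟩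
  set V := (X ⁻¹' B).indicator (1 : Ω → ℝ)
  have hVb : IsBinary V := IsBinary.indicator_one _
  have hVm : Measurable V := measurable_const.indicator (hX hB)
  have hVY : CondIndepFun m hm V Y μ := h.comp (measurable_const.indicator hB) measurable_id
  have hVE : Integrable (fun ω => V ω * μ[Y|m] ω) μ :=
    integrable_condExp.bdd_mul hVm.aestronglyMeasurable (ae_of_all _ hVb.norm_le_one)
  have hVYi : Integrable (fun ω => V ω * Y ω) μ :=
    hYi.bdd_mul hVm.aestronglyMeasurable (ae_of_all _ hVb.norm_le_one)
  have hs' : MeasurableSet s := hm s hs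
  have hind (F : Ω → ℝ) : ∫ ω in s ∩ X ⁻¹' B, F ω ∂μ = ∫ ω in s, V ω * F ω ∂μ := by
    rw [← setIntegral_indicator (hX hB)]
    congr 1 with ω
    rw [← Set.indicator_mul_left]
    simp only [Pi.one_apply, one_mul]
  show ∫ ω in s ∩ X ⁻¹' B, μ[Y|m] ω ∂μ = ∫ ω in s ∩ X ⁻¹' B, Y ω ∂μ
  rw [hind, hind]
  calc ∫ ω in s, V ω * μ[Y|m] ω ∂μ = ∫ ω in s, μ[V|m] ω * μ[Y|m] ω ∂μ := by
        rw [← setIntegral_condExp hm hVE hs]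
        refine setIntegral_congr_ae hs' ?_
        filter_upwards [condExp_mul_of_stronglyMeasurable_right stronglyMeasurable_condExp hVE
          (hVb.integrable hVm)] with ω h _ using h
    _ = ∫ ω in s, μ[fun ω => V ω * Y ω|m] ω ∂μ := by
        refine setIntegral_congr_ae hs' ?_
        filter_upwards [condExp_mul_of_condIndepFun hVm hY hVb hYb hVY] with ω h _ using h.symm
    _ = ∫ ω in s, V ω * Y ω ∂μ := setIntegral_condExp hm hVYi hs

end CondIndep

section PullOut

variable {Ω : Type*} {m G mΩ : MeasurableSpace Ω} {μ : Measure Ω} [IsFiniteMeasure μ]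

lemma condExp_one_sub (hm : m ≤ mΩ) {f : Ω → ℝ} (hf : Integrable f μ) :
    μ[fun ω => 1 - f ω|m] =ᵐ[μ] fun ω => 1 - μ[f|m] ω := by
  have := condExp_sub (m := m) (integrable_const (1 : ℝ)) hf
  rwa [condExp_const hm] at this

lemma condExp_mul_eq_of_condExp_eq [StandardBorelSpace Ω] (hmG : m ≤ G)
    (hG : G ≤ mΩ) {V S W : Ω → ℝ} (hV : StronglyMeasurable[G] V) (hVb : IsBinary V)
    (hSm : Measurable S) (hWm : Measurable W) (hSb : IsBinary S) (hWb : IsBinary W)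
    (hSW : CondIndepFun G hG S W μ) (hW : μ[W|G] =ᵐ[μ] μ[W|m]) :
    μ[fun ω => V ω * S ω * W ω|m] =ᵐ[μ] fun ω => μ[fun ω => V ω * S ω|m] ω * μ[W|m] ω := by
  have hVSW : μ[fun ω => V ω * (S ω * W ω)|G] =ᵐ[μ]
      fun ω => V ω * μ[fun ω => S ω * W ω|G] ω :=
    condExp_stronglyMeasurable_mul_of_bound hG hV ((hSb.mul hWb).integrable (hSm.mul hWm)) 1
      (ae_of_all _ hVb.norm_le_one)
  have hVS : μ[fun ω => V ω * S ω|G] =ᵐ[μ] fun ω => V ω * μ[S|G] ω :=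
    condExp_stronglyMeasurable_mul_of_bound hG hV (hSb.integrable hSm) 1
      (ae_of_all _ hVb.norm_le_one)
  have hinner : μ[fun ω => V ω * S ω * W ω|G] =ᵐ[μ]
      fun ω => μ[fun ω => V ω * S ω|G] ω * μ[W|m] ω := by
    filter_upwards [hVSW, hVS, condExp_mul_of_condIndepFun hSm hWm hSb hWb hSW, hW]
      with ω h₁ h₂ h₃ h₄
    simp only [mul_assoc] at h₁ ⊢
    rw [h₁, h₂, h₃, h₄, mul_assoc]
  have hWbd : ∀ᵐ ω ∂μ, ‖μ[W|m] ω‖ ≤ 1 := by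
    filter_upwards [hWb.condExp_mem_Icc (hmG.trans hG) hWm] with ω h
    exact abs_le.2 ⟨by linarith [h.1], h.2⟩
  calc μ[fun ω => V ω * S ω * W ω|m]
      =ᵐ[μ] μ[μ[fun ω => V ω * S ω * W ω|G]|m] := (condExp_condExp_of_le hmG hG).symm
    _ =ᵐ[μ] μ[fun ω => μ[fun ω => V ω * S ω|G] ω * μ[W|m] ω|m] := condExp_congr_ae hinner
    _ =ᵐ[μ] fun ω => μ[μ[fun ω => V ω * S ω|G]|m] ω * μ[W|m] ω :=
      condExp_mul_of_stronglyMeasurable_right stronglyMeasurable_condExp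
        (integrable_condExp.mul_bdd integrable_condExp.aestronglyMeasurable hWbd)
        integrable_condExp
    _ =ᵐ[μ] fun ω => μ[fun ω => V ω * S ω|m] ω * μ[W|m] ω := by
      filter_upwards [condExp_condExp_of_le (f := fun ω => V ω * S ω) hmG hG] with ω h
      rw [h]

end PullOut

section Edge

variable {Ω : Type*} {m mΩ : MeasurableSpace Ω} [StandardBorelSpace Ω] {μ : Measure Ω}
  [IsFiniteMeasure μ] {hm : m ≤ mΩ}

lemma condCov_eq_of_irreversible {X Z Y S₁ S₀ : Ω → ℝ} (hXm : Measurable X)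
    (hZm : Measurable Z) (hYm : Measurable Y) (hS₁m : Measurable S₁) (hS₀m : Measurable S₀)
    (hXb : IsBinary X)
    (hZb : IsBinary Z) (hYb : IsBinary Y) (hS₁b : IsBinary S₁) (hS₀b : IsBinary S₀)
    (hirr : ∀ᵐ ω ∂μ, Y ω * (1 - X ω) = Y ω)
    (hcons₁ : ∀ᵐ ω ∂μ, Y ω * Z ω = S₁ ω * Z ω)
    (hcons₀ : ∀ᵐ ω ∂μ, Y ω * (1 - Z ω) = S₀ ω * (1 - Z ω))
    (hXZ : CondIndepFun m hm X Z μ) (hle : m ⊔ MeasurableSpace.comap X inferInstance ≤ mΩ)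
    (hSZ : CondIndepFun (m ⊔ MeasurableSpace.comap X inferInstance) hle
      (fun ω => (S₁ ω, S₀ ω)) Z μ) :
    condCov μ m Y Z =ᵐ[μ] fun ω => μ[Z|m] ω * (1 - μ[Z|m] ω) *
      μ[fun ω => (S₁ ω - S₀ ω) * (if X ω = 0 then (1 : ℝ) else 0)|m] ω := by
  have hX' : StronglyMeasurable[m ⊔ MeasurableSpace.comap X inferInstance] fun ω => 1 - X ω :=
    (measurable_const.sub
      ((comap_measurable X).mono (le_sup_right (a := m)) le_rfl)).stronglyMeasurable
  have hZ'm : Measurable fun ω => 1 - Z ω := measurable_const.sub hZm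
  have h₁ : μ[fun ω => Y ω * Z ω|m] =ᵐ[μ]
      fun ω => μ[fun ω => (1 - X ω) * S₁ ω|m] ω * μ[Z|m] ω := by
    refine (condExp_congr_ae ?_).trans (condExp_mul_eq_of_condExp_eq le_sup_left hle hX'
      hXb.one_sub hS₁m hZm hS₁b hZb (hSZ.comp measurable_fst measurable_id)
      (condExp_sup_comap_eq_of_condIndepFun hXm hZm hZb hXZ hle))
    filter_upwards [hirr, hcons₁] with ω hi hc
    linear_combination (1 - X ω) * hc - Z ω * hi
  have h₀ : μ[fun ω => Y ω * (1 - Z ω)|m] =ᵐ[μ]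
      fun ω => μ[fun ω => (1 - X ω) * S₀ ω|m] ω * μ[fun ω => 1 - Z ω|m] ω := by
    refine (condExp_congr_ae ?_).trans (condExp_mul_eq_of_condExp_eq le_sup_left hle hX'
      hXb.one_sub hS₀m hZ'm hS₀b hZb.one_sub
      (hSZ.comp measurable_snd (measurable_const.sub measurable_id))
      (condExp_sup_comap_eq_of_condIndepFun hXm hZ'm hZb.one_sub
        (hXZ.comp measurable_id (measurable_const.sub measurable_id)) hle))
    filter_upwards [hirr, hcons₀] with ω hi hc
    linear_combination (1 - X ω) * hc - (1 - Z ω) * hi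
  have hY : μ[Y|m] =ᵐ[μ]
      fun ω => μ[fun ω => Y ω * Z ω|m] ω + μ[fun ω => Y ω * (1 - Z ω)|m] ω := by
    have hsplit : Y = fun ω => Y ω * Z ω + Y ω * (1 - Z ω) := by funext ω; ring
    conv_lhs => rw [hsplit]
    exact condExp_add ((hYb.mul hZb).integrable (hYm.mul hZm))
      ((hYb.mul hZb.one_sub).integrable (hYm.mul hZ'm)) m
  have hD : μ[fun ω => (S₁ ω - S₀ ω) * (if X ω = 0 then (1 : ℝ) else 0)|m] =ᵐ[μ]
      fun ω => μ[fun ω => (1 - X ω) * S₁ ω|m] ω - μ[fun ω => (1 - X ω) * S₀ ω|m] ω := by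
    have hfun : (fun ω => (S₁ ω - S₀ ω) * (if X ω = 0 then (1 : ℝ) else 0)) =
        fun ω => (1 - X ω) * S₁ ω - (1 - X ω) * S₀ ω := by
      funext ω; rw [hXb.if_eq_zero_eq_one_sub]; ring
    rw [hfun]
    exact condExp_sub ((hXb.one_sub.mul hS₁b).integrable ((measurable_const.sub hXm).mul hS₁m))
      ((hXb.one_sub.mul hS₀b).integrable ((measurable_const.sub hXm).mul hS₀m)) m
  filter_upwards [h₁, h₀, hY, hD, condExp_one_sub hm (hZb.integrable hZm)]
    with ω h₁ h₀ hY hD hZ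
  simp only [condCov, hY, h₁, h₀, hD, hZ]
  ring

end Edge

section Division

variable {Ω : Type*} {m mΩ : MeasurableSpace Ω} {μ : Measure Ω}

lemma lintegral_mul_ofReal_condExp [IsFiniteMeasure μ] (hm : m ≤ mΩ) {g : Ω → ENNReal}
    (hg : Measurable[m] g) {f : Ω → ℝ} (hf : Integrable f μ) (hf0 : 0 ≤ᵐ[μ] f) :
    ∫⁻ ω, g ω * ENNReal.ofReal (μ[f|m] ω) ∂μ = ∫⁻ ω, g ω * ENNReal.ofReal (f ω) ∂μ := by
  have htrim : (μ.withDensity fun ω => ENNReal.ofReal (μ[f|m] ω)).trim hm =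
      (μ.withDensity fun ω => ENNReal.ofReal (f ω)).trim hm := by
    refine @Measure.ext _ m _ _ fun s hs => ?_
    rw [trim_measurableSet_eq hm hs, trim_measurableSet_eq hm hs, withDensity_apply _ (hm s hs),
      withDensity_apply _ (hm s hs),
      ← ofReal_integral_eq_lintegral_ofReal integrable_condExp.integrableOn
        (ae_restrict_of_ae (condExp_nonneg hf0)),
      ← ofReal_integral_eq_lintegral_ofReal hf.integrableOn (ae_restrict_of_ae hf0),
      setIntegral_condExp hm hf hs]
  have hdens {F : Ω → ℝ} (hF : AEStronglyMeasurable F μ) :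
      ∫⁻ ω, g ω * ENNReal.ofReal (F ω) ∂μ =
        ∫⁻ ω, g ω ∂(μ.withDensity fun ω => ENNReal.ofReal (F ω)).trim hm := by
    rw [lintegral_trim hm hg, lintegral_withDensity_eq_lintegral_mul₀
      hF.aemeasurable.ennreal_ofReal (hg.mono hm le_rfl).aemeasurable]
    simp_rw [Pi.mul_apply, mul_comm]
  rw [hdens integrable_condExp.aestronglyMeasurable, hdens hf.aestronglyMeasurable, htrim]

lemma integrable_div_condExp [IsFiniteMeasure μ] (hm : m ≤ mΩ) {f Y : Ω → ℝ}
    (hf : Integrable f μ) (hY : AEStronglyMeasurable Y μ) (hYf : ∀ᵐ ω ∂μ, ‖Y ω‖ ≤ f ω)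
    (hpos : ∀ᵐ ω ∂μ, 0 < μ[f|m] ω) : Integrable (fun ω => Y ω / μ[f|m] ω) μ := by
  have hf0 : 0 ≤ᵐ[μ] f := by
    filter_upwards [hYf] with ω h using (norm_nonneg _).trans h
  have hinv : Measurable[m] fun ω => (μ[f|m] ω)⁻¹ := stronglyMeasurable_condExp.measurable.inv
  have hdom : Integrable (fun ω => (μ[f|m] ω)⁻¹ * f ω) μ := by
    refine ⟨((hinv.mono hm le_rfl).aestronglyMeasurable).mul hf.aestronglyMeasurable, ?_⟩
    have hnn : 0 ≤ᵐ[μ] fun ω => (μ[f|m] ω)⁻¹ * f ω := by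
      filter_upwards [hf0, hpos] with ω h h' using mul_nonneg (inv_nonneg.2 h'.le) h
    rw [hasFiniteIntegral_iff_ofReal hnn]
    calc ∫⁻ ω, ENNReal.ofReal ((μ[f|m] ω)⁻¹ * f ω) ∂μ
        = ∫⁻ ω, ENNReal.ofReal (μ[f|m] ω)⁻¹ * ENNReal.ofReal (μ[f|m] ω) ∂μ := by
          rw [lintegral_mul_ofReal_condExp hm hinv.ennreal_ofReal hf hf0]
          refine lintegral_congr_ae ?_
          filter_upwards [hpos] with ω h using ENNReal.ofReal_mul (inv_nonneg.2 h.le)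
      _ = ∫⁻ _, 1 ∂μ := by
          refine lintegral_congr_ae ?_
          filter_upwards [hpos] with ω h
          rw [← ENNReal.ofReal_mul (inv_nonneg.2 h.le), inv_mul_cancel₀ h.ne',
            ENNReal.ofReal_one]
      _ < ⊤ := by simp
  refine hdom.mono' (hY.div₀ integrable_condExp.aestronglyMeasurable) ?_
  filter_upwards [hYf, hpos] with ω h h'
  rw [norm_div, Real.norm_of_nonneg h'.le, div_eq_inv_mul]
  exact mul_le_mul_of_nonneg_left h (inv_nonneg.2 h'.le)

lemma condCov_div_of_stronglyMeasurable {g Y Z : Ω → ℝ} (hg : StronglyMeasurable[m] g)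
    (hY : Integrable Y μ) (hYZ : Integrable (fun ω => Y ω * Z ω) μ)
    (hYg : Integrable (fun ω => Y ω / g ω) μ)
    (hYgZ : Integrable (fun ω => Y ω / g ω * Z ω) μ) :
    condCov μ m (fun ω => Y ω / g ω) Z =ᵐ[μ] fun ω => condCov μ m Y Z ω / g ω := by
  have hg' : StronglyMeasurable[m] fun ω => (g ω)⁻¹ := hg.measurable.inv.stronglyMeasurable
  have h₁ : μ[fun ω => Y ω / g ω|m] =ᵐ[μ] fun ω => (g ω)⁻¹ * μ[Y|m] ω := by
    simp_rw [div_eq_inv_mul] at hYg ⊢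
    exact condExp_mul_of_stronglyMeasurable_left hg' hYg hY
  have h₂ : μ[fun ω => Y ω / g ω * Z ω|m] =ᵐ[μ]
      fun ω => (g ω)⁻¹ * μ[fun ω => Y ω * Z ω|m] ω := by
    simp_rw [div_mul_eq_mul_div, div_eq_inv_mul] at hYgZ ⊢
    exact condExp_mul_of_stronglyMeasurable_left hg' hYgZ hYZ
  filter_upwards [h₁, h₂] with ω h₁ h₂
  simp only [condCov, h₁, h₂]
  ring

lemma condCov_div_one_sub_condExp [IsFiniteMeasure μ] (hm : m ≤ mΩ) {X Y Z : Ω → ℝ}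
    (hXm : Measurable X) (hYm : Measurable Y) (hZm : Measurable Z) (hXb : IsBinary X)
    (hYb : IsBinary Y) (hZb : IsBinary Z) (hirr : ∀ᵐ ω ∂μ, Y ω * (1 - X ω) = Y ω)
    (hpos : ∀ᵐ ω ∂μ, 0 < 1 - μ[X|m] ω) :
    condCov μ m (fun ω => Y ω / (1 - μ[X|m] ω)) Z =ᵐ[μ]
      fun ω => condCov μ m Y Z ω / (1 - μ[X|m] ω) := by
  have hE := condExp_one_sub hm (μ := μ) (hXb.integrable hXm)
  have hdiv {V : Ω → ℝ} (hV : Measurable V) (hVX : ∀ᵐ ω ∂μ, ‖V ω‖ ≤ 1 - X ω) :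
      Integrable (fun ω => V ω / (1 - μ[X|m] ω)) μ := by
    refine (integrable_div_condExp hm (hXb.one_sub.integrable (measurable_const.sub hXm))
      hV.aestronglyMeasurable hVX ?_).congr ?_
    · filter_upwards [hE, hpos] with ω h h' using h ▸ h'
    · filter_upwards [hE] with ω h using by rw [h]
  have hYX : ∀ᵐ ω ∂μ, ‖Y ω‖ ≤ 1 - X ω := by
    filter_upwards [hirr] with ω h
    rcases hYb ω with hY | hY <;> rw [hY] at h ⊢
    · simpa using hXb.le_one ω
    · simp only [norm_one]; linarith
  have hYZX : ∀ᵐ ω ∂μ, ‖Y ω * Z ω‖ ≤ 1 - X ω := by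
    filter_upwards [hYX] with ω h
    rw [norm_mul]
    exact (mul_le_of_le_one_right (norm_nonneg _) (hZb.norm_le_one ω)).trans h
  refine condCov_div_of_stronglyMeasurable
    (stronglyMeasurable_const.sub stronglyMeasurable_condExp) (hYb.integrable hYm)
    ((hYb.mul hZb).integrable (hYm.mul hZm)) (hdiv hYm hYX) ?_
  simpa only [div_mul_eq_mul_div] using hdiv (V := fun ω => Y ω * Z ω) (hYm.mul hZm) hYZX

end Division

section EdgeSums

variable {N : Type*} [Fintype N] [DecidableEq N]

lemma Finset.sum_sum_filter_mem_eq_sum {M : Type*} [AddCommMonoid M] (E : Finset (N × N))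
    (F : N → N → M) :
    ∑ j, ∑ i ∈ Finset.univ.filter (fun i => (i, j) ∈ E), F i j = ∑ p ∈ E, F p.1 p.2 := by
  simp only [Finset.sum_filter]
  rw [Finset.sum_comm, ← Fintype.sum_prod_type' (fun i j => if (i, j) ∈ E then F i j else 0),
    ← Finset.sum_filter, Finset.filter_mem_eq_inter, Finset.univ_inter]

lemma Finset.sum_le_sum_of_sdiff {α : Type*} [DecidableEq α] {A B : Finset α} {c : α → ℝ}
    (hBA : ∀ p ∈ B \ A, c p = 0) (hAB : 0 ≤ ∑ p ∈ A \ B, c p) :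
    ∑ p ∈ B, c p ≤ ∑ p ∈ A, c p := by
  have := Finset.sum_sdiff_sub_sum_sdiff (s₁ := B) (s₂ := A) (f := c)
  rw [Finset.sum_eq_zero hBA] at this
  linarith

lemma sum_le_sum_mul_sum_filter {E₀ E : Finset (N × N)} {c τ : N → N → ℝ} {w : N → ℝ}
    (hw : ∀ j, 0 ≤ w j) (hzero : ∀ p ∈ E \ E₀, c p.1 p.2 = 0)
    (hc : ∀ p ∈ E₀, c p.1 p.2 = w p.2 * τ p.1 p.2)
    (hτ : ∀ j, 0 ≤ ∑ i ∈ Finset.univ.filter (fun i => (i, j) ∈ E₀ \ E), τ i j) :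
    ∑ p ∈ E, c p.1 p.2 ≤ ∑ j, w j * ∑ i ∈ Finset.univ.filter (fun i => (i, j) ∈ E₀), τ i j := by
  have hsum {A : Finset (N × N)} (hA : A ⊆ E₀) : ∑ p ∈ A, c p.1 p.2 =
      ∑ j, w j * ∑ i ∈ Finset.univ.filter (fun i => (i, j) ∈ A), τ i j := by
    simp_rw [← Finset.sum_sum_filter_mem_eq_sum A, Finset.mul_sum]
    refine Finset.sum_congr rfl fun j _ => Finset.sum_congr rfl fun i hi => ?_
    exact hc (i, j) (hA (Finset.mem_filter.1 hi).2)
  rw [← hsum subset_rfl]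
  refine Finset.sum_le_sum_of_sdiff hzero ?_
  rw [hsum Finset.sdiff_subset]
  exact Finset.sum_nonneg fun j _ => mul_nonneg (hw j) (hτ j)

end EdgeSums

theorem stmt5_general {Ω : Type*} [mΩ : MeasurableSpace Ω] [StandardBorelSpace Ω]
    (μ : Measure Ω) [IsProbabilityMeasure μ]
    {N : Type*} [Fintype N] [DecidableEq N]
    (E0 EG : Finset (N × N))
    (Y0 Y1 : N → Ω → ℝ) (Ys1 Ys0 : N → N → Ω → ℝ)
    (hY0m : ∀ j, Measurable (Y0 j)) (hY1m : ∀ i, Measurable (Y1 i))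
    (hYs1m : ∀ i j, (i, j) ∈ E0 → Measurable (Ys1 i j))
    (hYs0m : ∀ i j, (i, j) ∈ E0 → Measurable (Ys0 i j))
    (hY0b : ∀ j ω, Y0 j ω = 0 ∨ Y0 j ω = 1)
    (hY1b : ∀ i ω, Y1 i ω = 0 ∨ Y1 i ω = 1)
    (hYs1b : ∀ i j, (i, j) ∈ E0 → ∀ ω, Ys1 i j ω = 0 ∨ Ys1 i j ω = 1)
    (hYs0b : ∀ i j, (i, j) ∈ E0 → ∀ ω, Ys0 i j ω = 0 ∨ Ys0 i j ω = 1)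
    (H : MeasurableSpace Ω) (hH : H ≤ mΩ)
    -- irreversibility
    (hirr : ∀ i, ∀ᵐ ω ∂μ, Y1 i ω * (1 - Y0 i ω) = Y1 i ω)
    -- consistency relations along causal edges
    (hcons1 : ∀ i j, (i, j) ∈ E0 →
      ∀ᵐ ω ∂μ, Y1 i ω * Y0 j ω = Ys1 i j ω * Y0 j ω)
    (hcons0 : ∀ i j, (i, j) ∈ E0 →
      ∀ᵐ ω ∂μ, Y1 i ω * (1 - Y0 j ω) = Ys0 i j ω * (1 - Y0 j ω))
    -- `Y_{i,0}` and `Y_{j,0}` conditionally independent given ℋ, for each causal edge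
    (hci0 : ∀ i j, (i, j) ∈ E0 → CondIndepFun H hH (Y0 i) (Y0 j) μ)
    -- counterfactuals conditionally independent of `Y_{j,0}` given σ(ℋ, Y_{i,0})
    (hle : ∀ i : N, H ⊔ MeasurableSpace.comap (Y0 i) inferInstance ≤ mΩ)
    (hciY : ∀ i j, (i, j) ∈ E0 →
      CondIndepFun (H ⊔ MeasurableSpace.comap (Y0 i) inferInstance) (hle i)
        (fun ω => (Ys1 i j ω, Ys0 i j ω)) (Y0 j) μ)
    (hμ1 : ∀ i, ∀ᵐ ω ∂μ, 0 < 1 - (μ[Y0 i | H]) ω)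
    -- (a) vanishing covariance along non-causal proxy edges
    (hzero : ∀ i j, (i, j) ∈ EG \ E0 →
      condCov μ H (Y1 i) (Y0 j) =ᵐ[μ] 0)
    -- (b) nonnegative spillover effects on the untreated along missed causal edges
    (hmono : ∀ j : N, ∀ᵐ ω ∂μ,
      0 ≤ ∑ i ∈ Finset.univ.filter (fun i => (i, j) ∈ E0 \ EG),
            (μ[fun ω' => (Ys1 i j ω' - Ys0 i j ω')
                  * (if Y0 i ω' = 0 then (1 : ℝ) else 0) | H]) ω
              / (1 - (μ[Y0 i | H]) ω)) :
    ∀ᵐ ω ∂μ,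
      -- C_G^I ≤ D^I
      (1 / ((Fintype.card N : ℝ) *
            ((1 / (Fintype.card N : ℝ)) *
              ∑ l, (μ[Y0 l | H]) ω * (1 - (μ[Y0 l | H]) ω))))
          * ∑ e ∈ EG,
              condCov μ H (fun ω' => Y1 e.1 ω' / (1 - (μ[Y0 e.1 | H]) ω')) (Y0 e.2) ω
        ≤ ∑ j, ((μ[Y0 j | H]) ω * (1 - (μ[Y0 j | H]) ω)
              / ((Fintype.card N : ℝ) *
                  ((1 / (Fintype.card N : ℝ)) *
                    ∑ l, (μ[Y0 l | H]) ω * (1 - (μ[Y0 l | H]) ω))))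
            * ∑ i ∈ Finset.univ.filter (fun i => (i, j) ∈ E0),
                (μ[fun ω' => (Ys1 i j ω' - Ys0 i j ω')
                      * (if Y0 i ω' = 0 then (1 : ℝ) else 0) | H]) ω
                  / (1 - (μ[Y0 i | H]) ω) := by
  have hdiv (p : N × N) := condCov_div_one_sub_condExp hH (hY0m p.1) (hY1m p.1) (hY0m p.2)
    (hY0b p.1) (hY1b p.1) (hY0b p.2) (hirr p.1) (hμ1 p.1)
  have hedge (p : N × N) (hp : p ∈ E0) := condCov_eq_of_irreversible (hY0m p.1) (hY0m p.2)
    (hY1m p.1) (hYs1m _ _ hp) (hYs0m _ _ hp) (hY0b p.1) (hY0b p.2) (hY1b p.1) (hYs1b _ _ hp)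
    (hYs0b _ _ hp) (hirr p.1) (hcons1 _ _ hp) (hcons0 _ _ hp) (hci0 _ _ hp) (hle p.1)
    (hciY _ _ hp)
  have hIcc (j : N) := IsBinary.condExp_mem_Icc hH (hY0b j) (hY0m j) (μ := μ)
  filter_upwards [ae_all_iff.2 hdiv, (Filter.eventually_all_finset E0).2 hedge,
    (Filter.eventually_all_finset (EG \ E0)).2 fun p hp => hzero p.1 p.2 hp,
    ae_all_iff.2 hmono, ae_all_iff.2 hIcc] with ω hdiv hedge hzero hmono hIcc
  have hw (j : N) : 0 ≤ (μ[Y0 j|H]) ω * (1 - (μ[Y0 j|H]) ω) :=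
    mul_nonneg (hIcc j).1 (sub_nonneg.2 (hIcc j).2)
  set K := (Fintype.card N : ℝ) * ((1 / (Fintype.card N : ℝ)) *
    ∑ l, (μ[Y0 l | H]) ω * (1 - (μ[Y0 l | H]) ω))
  have hK : 0 ≤ 1 / K := by
    have := Finset.sum_nonneg fun l (_ : l ∈ Finset.univ) => hw l
    positivity
  refine (mul_le_mul_of_nonneg_left (sum_le_sum_mul_sum_filter
    (c := fun i j => condCov μ H (fun ω' => Y1 i ω' / (1 - μ[Y0 i|H] ω')) (Y0 j) ω) hw
    (fun p hp => ?_) (fun p hp => ?_) hmono) hK).trans_eq ?_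
  · rw [hdiv p, hzero p hp, Pi.zero_apply, zero_div]
  · rw [hdiv p, hedge p hp, mul_div_assoc]
  · rw [Finset.mul_sum]
    exact Finset.sum_congr rfl fun j _ => by ring

/-- second inequality of Lemma 2.2 of He–Song, "Measuring Diffusion over a
Large Network".  With a latent causal graph `G∘ = (N, E∘)` and an observed proxy graph
`G = (N, E_G)`, under irreversible state changes, the unconfoundedness condition (B),
vanishing covariances along non-causal proxy edges, and nonnegativity of the spillover
effects on the untreated along missed causal edges, the covariance measure `C_G^I` is a
lower bound for the diffusion on the untreated `D^I`, almost surely. -/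
theorem stmt5 {Ω : Type*} [mΩ : MeasurableSpace Ω] [StandardBorelSpace Ω]
    (μ : Measure Ω) [IsProbabilityMeasure μ]
    {N : Type*} [Fintype N] [DecidableEq N]
    (E0 EG : Finset (N × N)) (hE0 : ∀ e ∈ E0, e.1 ≠ e.2) (hEG : ∀ e ∈ EG, e.1 ≠ e.2)
    (Y0 Y1 : N → Ω → ℝ) (Ys1 Ys0 : N → N → Ω → ℝ)
    (hY0m : ∀ j, Measurable (Y0 j)) (hY1m : ∀ i, Measurable (Y1 i))
    (hYs1m : ∀ i j, (i, j) ∈ E0 → Measurable (Ys1 i j))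
    (hYs0m : ∀ i j, (i, j) ∈ E0 → Measurable (Ys0 i j))
    (hY0b : ∀ j ω, Y0 j ω = 0 ∨ Y0 j ω = 1)
    (hY1b : ∀ i ω, Y1 i ω = 0 ∨ Y1 i ω = 1)
    (hYs1b : ∀ i j, (i, j) ∈ E0 → ∀ ω, Ys1 i j ω = 0 ∨ Ys1 i j ω = 1)
    (hYs0b : ∀ i j, (i, j) ∈ E0 → ∀ ω, Ys0 i j ω = 0 ∨ Ys0 i j ω = 1)
    (H : MeasurableSpace Ω) (hH : H ≤ mΩ)
    -- irreversibility
    (hirr : ∀ i, ∀ᵐ ω ∂μ, Y1 i ω * (1 - Y0 i ω) = Y1 i ω)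
    -- consistency relations along causal edges
    (hcons1 : ∀ i j, (i, j) ∈ E0 →
      ∀ᵐ ω ∂μ, Y1 i ω * Y0 j ω = Ys1 i j ω * Y0 j ω)
    (hcons0 : ∀ i j, (i, j) ∈ E0 →
      ∀ᵐ ω ∂μ, Y1 i ω * (1 - Y0 j ω) = Ys0 i j ω * (1 - Y0 j ω))
    -- `Y_{i,0}` and `Y_{j,0}` conditionally independent given ℋ, for each causal edge
    (hci0 : ∀ i j, (i, j) ∈ E0 → CondIndepFun H hH (Y0 i) (Y0 j) μ)
    -- counterfactuals conditionally independent of `Y_{j,0}` given σ(ℋ, Y_{i,0})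
    (hle : ∀ i : N, H ⊔ MeasurableSpace.comap (Y0 i) inferInstance ≤ mΩ)
    (hciY : ∀ i j, (i, j) ∈ E0 →
      CondIndepFun (H ⊔ MeasurableSpace.comap (Y0 i) inferInstance) (hle i)
        (fun ω => (Ys1 i j ω, Ys0 i j ω)) (Y0 j) μ)
    -- `v² > 0` a.s. and `1 − μ_{i,0} > 0` a.s.
    (hv : ∀ᵐ ω ∂μ,
      0 < (1 / (Fintype.card N : ℝ)) *
            ∑ j, (μ[Y0 j | H]) ω * (1 - (μ[Y0 j | H]) ω))
    (hμ1 : ∀ i, ∀ᵐ ω ∂μ, 0 < 1 - (μ[Y0 i | H]) ω)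
    -- (a) vanishing covariance along non-causal proxy edges
    (hzero : ∀ i j, (i, j) ∈ EG \ E0 →
      condCov μ H (Y1 i) (Y0 j) =ᵐ[μ] 0)
    -- (b) nonnegative spillover effects on the untreated along missed causal edges
    (hmono : ∀ j : N, ∀ᵐ ω ∂μ,
      0 ≤ ∑ i ∈ Finset.univ.filter (fun i => (i, j) ∈ E0 \ EG),
            (μ[fun ω' => (Ys1 i j ω' - Ys0 i j ω')
                  * (if Y0 i ω' = 0 then (1 : ℝ) else 0) | H]) ω
              / (1 - (μ[Y0 i | H]) ω)) :
    ∀ᵐ ω ∂μ,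
      -- C_G^I ≤ D^I
      (1 / ((Fintype.card N : ℝ) *
            ((1 / (Fintype.card N : ℝ)) *
              ∑ l, (μ[Y0 l | H]) ω * (1 - (μ[Y0 l | H]) ω))))
          * ∑ e ∈ EG,
              condCov μ H (fun ω' => Y1 e.1 ω' / (1 - (μ[Y0 e.1 | H]) ω')) (Y0 e.2) ω
        ≤ ∑ j, ((μ[Y0 j | H]) ω * (1 - (μ[Y0 j | H]) ω)
              / ((Fintype.card N : ℝ) *
                  ((1 / (Fintype.card N : ℝ)) *
                    ∑ l, (μ[Y0 l | H]) ω * (1 - (μ[Y0 l | H]) ω))))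
            * ∑ i ∈ Finset.univ.filter (fun i => (i, j) ∈ E0),
                (μ[fun ω' => (Ys1 i j ω' - Ys0 i j ω')
                      * (if Y0 i ω' = 0 then (1 : ℝ) else 0) | H]) ω
                  / (1 - (μ[Y0 i | H]) ω) :=
  stmt5_general (mΩ := mΩ) μ E0 EG Y0 Y1 Ys1 Ys0 hY0m hY1m hYs1m hYs0m hY0b hY1b hYs1b hYs0b H hH
    hirr hcons1 hcons0 hci0 hle hciY hμ1 hzero hmono
end

section
/- Let N be a finite set and G∘ = (N, E∘) a directed graph without self-loops with in-neighborhoods N∘(i) and N̄∘(i) = N∘(i) ∪ {i}. Let (Y_{j,0})_{j∈N} be random variables and (U_{i,1})_{i∈N} random elements of measurable spaces, and 𝒢 a sub-σ-algebra. Suppose that for each i ∈ N, Y_{i,1} = ρ_i((Y_{j,0})_{j∈N̄∘(i)}, U_{i,1}) for some measurable function ρ_i. If G∘ is a dynamic causal graph for (U₁, Y₀) given 𝒢, where U₁ = (U_{i,1})_{i∈N}, then G∘ is a dynamic causal graph for (Y₁, Y₀) given 𝒢. -/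
open MeasureTheory ProbabilityTheory

/-- In-neighborhood of `i` in the directed graph with edge set `E`:
`N(i) = {j : (i, j) ∈ E}` (an edge `(i, j)` represents causation from `j` to `i`). -/
def inNbhd {N : Type*} [Fintype N] [DecidableEq N] (E : Finset (N × N)) (i : N) : Finset N :=
  Finset.univ.filter (fun j => (i, j) ∈ E)

/-- `N̄(A) = ∪_{i ∈ A} (N(i) ∪ {i})`. -/
def closedNbhdSet {N : Type*} [Fintype N] [DecidableEq N] (E : Finset (N × N))
    (A : Finset N) : Finset N :=
  A ∪ A.biUnion (inNbhd E)

/-- `G = (N, E)` is a *dynamic causal graph* for `(Z₁, Y₀)` given the sub-σ-algebra `m`. -/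
def IsDynCausalGraph {Ω : Type*} {mΩ : MeasurableSpace Ω} [StandardBorelSpace Ω]
    (μ : Measure Ω) [IsFiniteMeasure μ]
    (m : MeasurableSpace Ω) (hm : m ≤ mΩ)
    {N : Type*} [Fintype N] [DecidableEq N] (E : Finset (N × N))
    {β : Type*} [MeasurableSpace β]
    (Z1 : N → Ω → β) (Y0 : N → Ω → ℝ) : Prop :=
  ∀ A B A' B' : Finset N,
    Disjoint A B → Disjoint A A' → Disjoint A B' →
    Disjoint B A' → Disjoint B B' → Disjoint A' B' →
    (closedNbhdSet E A ∪ B) ∩ (closedNbhdSet E A' ∪ B') = ∅ →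
    CondIndepFun m hm
      (fun ω => ((fun i : A => Z1 i ω),
                 (fun j : ((B ∪ closedNbhdSet E A : Finset N) : Type _) => Y0 j ω)))
      (fun ω => ((fun i : A' => Z1 i ω),
                 (fun j : ((B' ∪ closedNbhdSet E A' : Finset N) : Type _) => Y0 j ω)))
      μ

lemma mem_helper {N : Type*} [Fintype N] [DecidableEq N] (E : Finset (N × N))
    {A B : Finset N} {i : N} (hi : i ∈ A) {j : N} (hj : j ∈ closedNbhdSet E {i}) :
    j ∈ B ∪ closedNbhdSet E A := by
  simp only [closedNbhdSet, Finset.mem_union, Finset.mem_biUnion, Finset.mem_singleton] at hj ⊢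
  rcases hj with h | ⟨k, hk, hjk⟩
  · exact Or.inr (Or.inl (h ▸ hi))
  · exact Or.inr (Or.inr ⟨i, hi, hk ▸ hjk⟩)

/-- Section 2.2 of He–Song, "Measuring Diffusion over a Large Network".
If each second-period outcome is generated as `Y_{i,1} = ρ_i((Y_{j,0})_{j ∈ N̄∘(i)}, U_{i,1})`
for measurable maps `ρ_i`, and `G∘` is a dynamic causal graph for `(U₁, Y₀)` given `𝒢`,
then `G∘` is a dynamic causal graph for `(Y₁, Y₀)` given `𝒢`. -/
theorem stmt7 {Ω : Type*} {mΩ : MeasurableSpace Ω} [StandardBorelSpace Ω]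
    (μ : Measure Ω) [IsProbabilityMeasure μ]
    {N : Type*} [Fintype N] [DecidableEq N]
    {V : Type*} [MeasurableSpace V]
    (E : Finset (N × N)) (hE : ∀ e ∈ E, e.1 ≠ e.2)
    (G : MeasurableSpace Ω) (hG : G ≤ mΩ)
    (Y0 Y1 : N → Ω → ℝ) (U : N → Ω → V)
    (ρ : (i : N) → (((closedNbhdSet E {i} : Finset N) : Type _) → ℝ) × V → ℝ)
    (hρ : ∀ i, Measurable (ρ i))
    (hY1 : ∀ i ω,
      Y1 i ω = ρ i ((fun j : ((closedNbhdSet E {i} : Finset N) : Type _) => Y0 j ω), U i ω))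
    (h : IsDynCausalGraph μ G hG E U Y0) :
    IsDynCausalGraph μ G hG E Y1 Y0 := by
  intro A B A' B' h1 h2 h3 h4 h5 h6 hdisj
  have key := h A B A' B' h1 h2 h3 h4 h5 h6 hdisj
  set φ : (∀ _ : (A : Type _), V) × (((B ∪ closedNbhdSet E A : Finset N) : Type _) → ℝ) →
      (((A : Finset N) : Type _) → ℝ) ×
        (((B ∪ closedNbhdSet E A : Finset N) : Type _) → ℝ) :=
    fun p => ((fun i => ρ i.1
      ((fun j => p.2 ⟨j.1, mem_helper E i.2 j.2⟩), p.1 i)), p.2) with hφdef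
  set ψ : (∀ _ : (A' : Type _), V) × (((B' ∪ closedNbhdSet E A' : Finset N) : Type _) → ℝ) →
      (((A' : Finset N) : Type _) → ℝ) ×
        (((B' ∪ closedNbhdSet E A' : Finset N) : Type _) → ℝ) :=
    fun p => ((fun i => ρ i.1
      ((fun j => p.2 ⟨j.1, mem_helper E i.2 j.2⟩), p.1 i)), p.2) with hψdef
  have hφ : Measurable φ := by
    refine Measurable.prod ?_ measurable_snd
    refine measurable_pi_lambda _ fun i => (hρ i.1).comp ?_
    exact Measurable.prod
      (measurable_pi_lambda _ fun j => measurable_snd.eval)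
      ((measurable_pi_apply i).comp measurable_fst)
  have hψ : Measurable ψ := by
    refine Measurable.prod ?_ measurable_snd
    refine measurable_pi_lambda _ fun i => (hρ i.1).comp ?_
    exact Measurable.prod
      (measurable_pi_lambda _ fun j => measurable_snd.eval)
      ((measurable_pi_apply i).comp measurable_fst)
  have := key.comp hφ hψ
  convert this using 2 with ω ω
  · ext i
    · simp only [Function.comp_apply, hφdef, hY1]
    · rfl
  · ext i
    · simp only [Function.comp_apply, hψdef, hY1]
    · rfl
end

section
/- Let 𝒢 ⊆ 𝒢∘ be sub-σ-algebras of ℱ, N a finite set, and G = (N, E_G) a directed graph without self-loops with in-neighborhoods N_G(i). Let (Y_{i,1})_{i∈N} and (Y_{j,0})_{j∈N} be bounded random variables, and suppose E[Y_{j,0} | 𝒢∘] = E[Y_{j,0} | 𝒢] =: μ_{j,0} almost surely for every j ∈ N. Define ε_{i,1} = Y_{i,1} − E[Y_{i,1} | 𝒢], ε_{j,0} = Y_{j,0} − μ_{j,0}, and a_i = Σ_{j∈N_G(i)} ε_{j,0}. Then, almost surely, Σ_{i∈N} Σ_{j∈N_G(i)} Cov(Y_{i,1}, Y_{j,0} |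 𝒢∘) = Σ_{i∈N} E[ε_{i,1} a_i | 𝒢∘]. -/
/-!
Write `R_𝒢 Y = Y - E[Y | 𝒢]`. Since the means of `Y₀` given `𝒢` and `𝒢∘` agree,
`R_𝒢 Y₀ = R_𝒢∘ Y₀` a.s., so `R_𝒢 Y₁ * R_𝒢 Y₀ = Y₁ * R_𝒢∘ Y₀ - E[Y₁ | 𝒢] * R_𝒢∘ Y₀`.
Conditioning on `𝒢∘`, the second term vanishes because `E[Y₁ | 𝒢]` is `𝒢∘`-measurable
(as `𝒢 ≤ 𝒢∘`) and `E[R_𝒢∘ Y₀ | 𝒢∘] = 0`, while the first term becomes the conditional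
covariance after pulling out `E[Y₀ | 𝒢∘]`. Summing over the edges is linearity.
-/

open MeasureTheory ProbabilityTheory

section

variable {Ω : Type*} {m m0 : MeasurableSpace Ω} {μ : Measure Ω} {X Y Z : Ω → ℝ}

lemma condExp_mul_finsetSum {ι : Type*} (s : Finset ι) {f : Ω → ℝ} {g : ι → Ω → ℝ}
    (hfg : ∀ i ∈ s, Integrable (f * g i) μ) :
    ∀ᵐ ω ∂μ, μ[fun ω' => f ω' * ∑ i ∈ s, g i ω' | m] ω = ∑ i ∈ s, μ[f * g i | m] ω := by
  have hsum : (fun ω' => f ω' * ∑ i ∈ s, g i ω') = ∑ i ∈ s, f * g i := by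
    ext ω'
    simp only [Finset.sum_apply, Pi.mul_apply, Finset.mul_sum]
  filter_upwards [condExp_finsetSum hfg m] with ω h
  rw [hsum, h, Finset.sum_apply]

variable [IsFiniteMeasure μ]

lemma memLp_of_abs_le {p : ENNReal} (hX : Measurable X) (hXb : ∃ C, ∀ ω, |X ω| ≤ C) :
    MemLp X p μ := by
  obtain ⟨C, hC⟩ := hXb
  exact .of_bound hX.aestronglyMeasurable C (.of_forall hC)

lemma condExp_sub_condExp_self (hm : m ≤ m0) (hY : Integrable Y μ) :
    μ[Y - μ[Y | m] | m] =ᵐ[μ] 0 := by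
  filter_upwards [condExp_sub hY integrable_condExp m] with ω h
  rw [h, Pi.sub_apply,
    condExp_of_stronglyMeasurable hm stronglyMeasurable_condExp integrable_condExp,
    sub_self, Pi.zero_apply]

lemma condExp_mul_sub_condExp_of_stronglyMeasurable (hm : m ≤ m0)
    (hZ : StronglyMeasurable[m] Z) (hZ2 : MemLp Z 2 μ) (hY : MemLp Y 2 μ) :
    μ[Z * (Y - μ[Y | m]) | m] =ᵐ[μ] 0 := by
  have hres : MemLp (Y - μ[Y | m]) 2 μ := hY.sub (hY.condExp one_le_two)
  filter_upwards [condExp_mul_of_stronglyMeasurable_left hZ (hZ2.integrable_mul hres)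
    (hres.integrable one_le_two), condExp_sub_condExp_self hm (hY.integrable one_le_two)]
    with ω hmul hzero
  rw [hmul, Pi.mul_apply, hzero, Pi.zero_apply, mul_zero]

lemma condExp_mul_sub_condExp_ae_eq_condCov (hX : MemLp X 2 μ) (hY : MemLp Y 2 μ) :
    μ[X * (Y - μ[Y | m]) | m] =ᵐ[μ] condCov μ m X Y := by
  have hcY : MemLp (μ[Y | m]) 2 μ := hY.condExp one_le_two
  have hsplit : X * (Y - μ[Y | m]) = X * Y - μ[Y | m] * X := by ring
  filter_upwards [condExp_sub (hX.integrable_mul hY) (hcY.integrable_mul hX) m,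
    condExp_mul_of_stronglyMeasurable_left stronglyMeasurable_condExp (hcY.integrable_mul hX)
      (hX.integrable one_le_two)] with ω hsub hmul
  change _ = μ[X * Y | m] ω - μ[X | m] ω * μ[Y | m] ω
  rw [hsplit, hsub, Pi.sub_apply, hmul, Pi.mul_apply, mul_comm (μ[Y | m] ω)]

lemma condExp_sub_mul_sub_condExp_ae_eq_condCov (hm : m ≤ m0) (hZ : StronglyMeasurable[m] Z)
    (hZ2 : MemLp Z 2 μ) (hX : MemLp X 2 μ) (hY : MemLp Y 2 μ) :
    μ[(X - Z) * (Y - μ[Y | m]) | m] =ᵐ[μ] condCov μ m X Y := by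
  have hres : MemLp (Y - μ[Y | m]) 2 μ := hY.sub (hY.condExp one_le_two)
  have hsplit : (X - Z) * (Y - μ[Y | m]) = X * (Y - μ[Y | m]) - Z * (Y - μ[Y | m]) := by ring
  filter_upwards [condExp_sub (hX.integrable_mul hres) (hZ2.integrable_mul hres) m,
    condExp_mul_sub_condExp_ae_eq_condCov hX hY,
    condExp_mul_sub_condExp_of_stronglyMeasurable hm hZ hZ2 hY] with ω hsub hcov hzero
  rw [hsplit, hsub, Pi.sub_apply, hcov, hzero, Pi.zero_apply, sub_zero]

lemma condExp_residual_mul_residual_ae_eq_condCov {G G0 : MeasurableSpace Ω} (hGG0 : G ≤ G0)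
    (hG0 : G0 ≤ m0) (hX : MemLp X 2 μ) (hY : MemLp Y 2 μ) (hYG : μ[Y | G0] =ᵐ[μ] μ[Y | G]) :
    μ[(X - μ[X | G]) * (Y - μ[Y | G]) | G0] =ᵐ[μ] condCov μ G0 X Y := by
  have hres : (X - μ[X | G]) * (Y - μ[Y | G]) =ᵐ[μ] (X - μ[X | G]) * (Y - μ[Y | G0]) :=
    .mul .rfl (.sub .rfl hYG.symm)
  exact (condExp_congr_ae hres).trans <| condExp_sub_mul_sub_condExp_ae_eq_condCov hG0
    (stronglyMeasurable_condExp.mono hGG0) (hX.condExp one_le_two) hX hY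

end

theorem stmt8_general {Ω : Type*} [mΩ : MeasurableSpace Ω]
    (μ : Measure Ω) [IsProbabilityMeasure μ]
    {N : Type*} [Fintype N] [DecidableEq N]
    (E : Finset (N × N))
    (Y0 Y1 : N → Ω → ℝ)
    (hY0m : ∀ j, Measurable (Y0 j)) (hY1m : ∀ i, Measurable (Y1 i))
    (hY0b : ∀ j, ∃ C : ℝ, ∀ ω, |Y0 j ω| ≤ C)
    (hY1b : ∀ i, ∃ C : ℝ, ∀ ω, |Y1 i ω| ≤ C)
    (G G0 : MeasurableSpace Ω) (hGG0 : G ≤ G0) (hG0 : G0 ≤ mΩ)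
    (hmu : ∀ j : N, μ[Y0 j | G0] =ᵐ[μ] μ[Y0 j | G]) :
    ∀ᵐ ω ∂μ,
      (∑ i, ∑ j ∈ inNbhd E i, condCov μ G0 (Y1 i) (Y0 j) ω)
        = ∑ i,
            (μ[fun ω' => (Y1 i ω' - (μ[Y1 i | G]) ω')
                  * ∑ j ∈ inNbhd E i, (Y0 j ω' - (μ[Y0 j | G]) ω') | G0]) ω := by
  have hY0 : ∀ j, MemLp (Y0 j) 2 μ := fun j => memLp_of_abs_le (hY0m j) (hY0b j)
  have hY1 : ∀ i, MemLp (Y1 i) 2 μ := fun i => memLp_of_abs_le (hY1m i) (hY1b i)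
  have hlin : ∀ i, ∀ᵐ ω ∂μ,
      μ[fun ω' => (Y1 i ω' - μ[Y1 i | G] ω') * ∑ j ∈ inNbhd E i, (Y0 j ω' - μ[Y0 j | G] ω') | G0] ω
        = ∑ j ∈ inNbhd E i, μ[(Y1 i - μ[Y1 i | G]) * (Y0 j - μ[Y0 j | G]) | G0] ω := fun i =>
    condExp_mul_finsetSum (g := fun j => Y0 j - μ[Y0 j | G]) _ fun j _ =>
      ((hY1 i).sub ((hY1 i).condExp one_le_two)).integrable_mul
        ((hY0 j).sub ((hY0 j).condExp one_le_two))
  have hcov : ∀ i j, μ[(Y1 i - μ[Y1 i | G]) * (Y0 j - μ[Y0 j | G]) | G0]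
      =ᵐ[μ] condCov μ G0 (Y1 i) (Y0 j) := fun i j =>
    condExp_residual_mul_residual_ae_eq_condCov hGG0 hG0 (hY1 i) (hY0 j) (hmu j)
  filter_upwards [ae_all_iff.2 hlin, ae_all_iff.2 fun i => ae_all_iff.2 (hcov i)]
    with ω hlin_ω hcov_ω
  simp only [hlin_ω, hcov_ω]

/-- identity (equiv), `C_G = C̃_G`, Section 3.3 of He–Song, "Measuring
Diffusion over a Large Network".  If `E[Y_{j,0} | 𝒢∘] = E[Y_{j,0} | 𝒢]` a.s. for all `j`,
then a.s.
`Σ_i Σ_{j ∈ N_G(i)} Cov(Y_{i,1}, Y_{j,0} | 𝒢∘) = Σ_i E[ε_{i,1} a_i | 𝒢∘]`,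
where `ε_{i,1} = Y_{i,1} − E[Y_{i,1}|𝒢]`, `ε_{j,0} = Y_{j,0} − E[Y_{j,0}|𝒢]` and
`a_i = Σ_{j ∈ N_G(i)} ε_{j,0}`. -/
theorem stmt8 {Ω : Type*} [mΩ : MeasurableSpace Ω]
    (μ : Measure Ω) [IsProbabilityMeasure μ]
    {N : Type*} [Fintype N] [DecidableEq N]
    (E : Finset (N × N)) (hE : ∀ e ∈ E, e.1 ≠ e.2)
    (Y0 Y1 : N → Ω → ℝ)
    (hY0m : ∀ j, Measurable (Y0 j)) (hY1m : ∀ i, Measurable (Y1 i))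
    (hY0b : ∀ j, ∃ C : ℝ, ∀ ω, |Y0 j ω| ≤ C)
    (hY1b : ∀ i, ∃ C : ℝ, ∀ ω, |Y1 i ω| ≤ C)
    (G G0 : MeasurableSpace Ω) (hGG0 : G ≤ G0) (hG0 : G0 ≤ mΩ)
    (hmu : ∀ j : N, μ[Y0 j | G0] =ᵐ[μ] μ[Y0 j | G]) :
    ∀ᵐ ω ∂μ,
      (∑ i, ∑ j ∈ inNbhd E i, condCov μ G0 (Y1 i) (Y0 j) ω)
        = ∑ i,
            (μ[fun ω' => (Y1 i ω' - (μ[Y1 i | G]) ω')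
                  * ∑ j ∈ inNbhd E i, (Y0 j ω' - (μ[Y0 j | G]) ω') | G0]) ω :=
  stmt8_general (mΩ := mΩ) μ E Y0 Y1 hY0m hY1m hY0b hY1b G G0 hGG0 hG0 hmu
end

section
/- Let N be a finite set with |N| = n, let G = (N, E_G) and G∘ = (N, E∘) be directed graphs without self-loops, and set N(i) = N_G(i) ∪ N∘(i), N̄(i) = N(i) ∪ {i}, where N_G(i), N∘(i) are in-neighborhoods. Let 𝒢 ⊆ 𝒢∘ be sub-σ-algebras, and let (Y_{i,1})_{i∈N}, (Y_{j,0})_{j∈N} be {0,1}-valued random variables. Define ε_{i,1} = Y_{i,1} − E[Y_{i,1}|𝒢], ε_{j,0} = Y_{j,0} − E[Y_{j,0}|𝒢], and a_i = Σ_{j∈N_G(i)} ε_{j,0}. Suppose that whenever N̄(i₁) ∩ N̄(i₂) = ∅, the random vectors (Y_{i₁,1}, (Y_{j,0})_{j∈N̄(i₁)}) and (Y_{i₂,1}, (Y_{j,0})_{j∈N̄(i₂)}) are conditionally independent given 𝒢∘. Then: (i) Cov(ε_{i₁,1} a_{i₁}, ε_{i₂,1} a_{i₂} | 𝒢∘)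 = 0 almost surely for every pair i₁, i₂ with N̄(i₁) ∩ N̄(i₂) = ∅; and consequently (ii) almost surely, Var( Σ_{i∈N} ε_{i,1} a_i | 𝒢∘ ) ≤ 2·d_{mx,G}² · #{(i₁, i₂) ∈ N×N : N̄(i₁) ∩ N̄(i₂) ≠ ∅}, where d_{mx,G} = max_{i∈N} |N_G(i)|. -/
/-!
Conditional independence of `m₁` and `m₂` given `m'` yields `E[f g | m'] = E[f | m'] E[g | m']`
for indicators of `m₁`- and `m₂`-sets, hence, pulling out `m'`-measurable factors and using
bilinearity, for all finite sums `∑ Wₖ 1_{Sₖ}` with bounded `m'`-measurable `Wₖ` (`IsCondSimple`).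
As `E[Y | 𝒢]` is `𝒢∘`-measurable and the outcomes are indicators, every `ε_{i,1} a_i` is such a sum
over the σ-algebra of its neighbourhood vector; this gives (i). For (ii), the conditional variance
of the sum is the sum of all pairwise conditional covariances; those of non-overlapping pairs vanish
by (i) and the others are at most `2 d²`, since `|ε_{i,1} a_i| ≤ |N_G(i)| ≤ d`.
-/

open MeasureTheory ProbabilityTheory

open Filter Finset

namespace ProbabilityTheory

variable {Ω : Type*} {m m' m₁ m₂ : MeasurableSpace Ω} {mΩ : MeasurableSpace Ω} {μ : Measure Ω}

lemma ae_abs_mul_le {f g : Ω → ℝ} {C D : ℝ} (hf : ∀ᵐ ω ∂μ, |f ω| ≤ C)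
    (hg : ∀ᵐ ω ∂μ, |g ω| ≤ D) : ∀ᵐ ω ∂μ, |(f * g) ω| ≤ C * D := by
  filter_upwards [hf, hg] with ω h₁ h₂
  rw [Pi.mul_apply, abs_mul]
  exact mul_le_mul h₁ h₂ (abs_nonneg _) ((abs_nonneg _).trans h₁)

lemma mul_indicator_mul_mul_indicator (W V : Ω → ℝ) (S T : Set Ω) :
    (W * S.indicator fun _ => (1 : ℝ)) * (V * T.indicator fun _ => 1)
      = (W * V) * (S ∩ T).indicator fun _ => 1 := by
  ext ω
  by_cases hωS : ω ∈ S <;> by_cases hωT : ω ∈ T <;> simp [hωS, hωT]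

inductive IsCondSimple {mΩ : MeasurableSpace Ω} (m' m₁ : MeasurableSpace Ω) (μ : Measure[mΩ] Ω) :
    (Ω → ℝ) → Prop
  | mul_indicator {W : Ω → ℝ} {S : Set Ω} (C : ℝ) (hW : StronglyMeasurable[m'] W)
      (hWC : ∀ᵐ ω ∂μ, |W ω| ≤ C) (hS : MeasurableSet[m₁] S) :
      IsCondSimple m' m₁ μ (W * S.indicator fun _ => 1)
  | add {f g : Ω → ℝ} :
      IsCondSimple m' m₁ μ f → IsCondSimple m' m₁ μ g → IsCondSimple m' m₁ μ (f + g)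

namespace IsCondSimple

lemma of_stronglyMeasurable {W : Ω → ℝ} (C : ℝ) (hW : StronglyMeasurable[m'] W)
    (hWC : ∀ᵐ ω ∂μ, |W ω| ≤ C) : IsCondSimple m' m₁ μ W := by
  convert mul_indicator C hW hWC (m₁ := m₁) MeasurableSet.univ
  simp [← Pi.one_def]

lemma zero : IsCondSimple m' m₁ μ 0 :=
  of_stronglyMeasurable 0 stronglyMeasurable_const (by simp)

lemma of_forall_eq_zero_or_eq_one {f : Ω → ℝ} (hf : Measurable[m₁] f)
    (h01 : ∀ ω, f ω = 0 ∨ f ω = 1) : IsCondSimple m' m₁ μ f := by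
  have hf_eq : f = (fun _ => 1) * {ω | f ω = 1}.indicator fun _ => 1 := by
    ext ω
    rcases h01 ω with h | h <;> simp [h]
  rw [hf_eq]
  exact mul_indicator 1 stronglyMeasurable_const (by simp) (hf (measurableSet_singleton 1))

lemma neg {f : Ω → ℝ} (hf : IsCondSimple m' m₁ μ f) : IsCondSimple m' m₁ μ (-f) := by
  induction hf with
  | @mul_indicator W S C hW hWC hS =>
    rw [← neg_mul]
    exact mul_indicator C hW.neg (by simpa using hWC) hS
  | add _ _ ihf ihg => rw [neg_add]; exact ihf.add ihg

lemma sub {f g : Ω → ℝ} (hf : IsCondSimple m' m₁ μ f) (hg : IsCondSimple m' m₁ μ g) :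
    IsCondSimple m' m₁ μ (f - g) := by
  rw [sub_eq_add_neg]; exact hf.add hg.neg

lemma finsetSum {ι : Type*} (s : Finset ι) {f : ι → Ω → ℝ}
    (hf : ∀ i ∈ s, IsCondSimple m' m₁ μ (f i)) : IsCondSimple m' m₁ μ (∑ i ∈ s, f i) := by
  classical
  induction s using Finset.induction_on with
  | empty => simpa using zero
  | insert i s hi ih =>
    rw [Finset.sum_insert hi]
    exact (hf i (s.mem_insert_self i)).add (ih fun j hj => hf j (Finset.mem_insert_of_mem hj))

lemma mono {f : Ω → ℝ} (hf : IsCondSimple m' m₁ μ f) (h : m₁ ≤ m₂) : IsCondSimple m' m₂ μ f := by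
  induction hf with
  | mul_indicator C hW hWC hS => exact mul_indicator C hW hWC (h _ hS)
  | add _ _ ihf ihg => exact ihf.add ihg

lemma mul {f g : Ω → ℝ} (hf : IsCondSimple m' m₁ μ f) (hg : IsCondSimple m' m₁ μ g) :
    IsCondSimple m' m₁ μ (f * g) := by
  induction hf with
  | @mul_indicator W S C hW hWC hS =>
    induction hg with
    | @mul_indicator V T D hV hVD hT =>
      rw [mul_indicator_mul_mul_indicator]
      exact mul_indicator (C * D) (hW.mul hV) (ae_abs_mul_le hWC hVD) (hS.inter hT)
    | add _ _ ihf ihg => rw [mul_add]; exact ihf.add ihg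
  | add _ _ ihf ihg => rw [add_mul]; exact ihf.add ihg

lemma integrable [IsFiniteMeasure μ] (hm' : m' ≤ mΩ) (hm₁ : m₁ ≤ mΩ) {f : Ω → ℝ}
    (hf : IsCondSimple m' m₁ μ f) : Integrable f μ := by
  induction hf with
  | @mul_indicator W S C hW hWC hS =>
    refine Integrable.of_bound (C := C)
      ((hW.mono hm').aestronglyMeasurable.mul
        (stronglyMeasurable_const.indicator (hm₁ _ hS)).aestronglyMeasurable) ?_
    filter_upwards [hWC] with ω h
    rw [Pi.mul_apply, Real.norm_eq_abs, abs_mul]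
    calc |W ω| * |S.indicator (fun _ => (1 : ℝ)) ω| ≤ |W ω| * 1 := by
          gcongr; by_cases hω : ω ∈ S <;> simp [hω]
      _ ≤ C := by simpa using h
  | add _ _ ihf ihg => exact ihf.add ihg

lemma sub_condExp (hm : m ≤ m') {f : Ω → ℝ} (hf : Measurable[m₁] f)
    (h01 : ∀ ω, f ω = 0 ∨ f ω = 1) : IsCondSimple m' m₁ μ (f - μ[f | m]) := by
  have hf_abs (ω : Ω) : |f ω| ≤ 1 := by rcases h01 ω with h | h <;> simp [h]
  exact (of_forall_eq_zero_or_eq_one hf h01).sub <| of_stronglyMeasurable 1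
    (stronglyMeasurable_condExp.mono hm) (ae_bdd_abs_condExp_of_ae_bdd_abs (ae_of_all _ hf_abs))

end IsCondSimple

lemma condExp_add_mul_ae_eq {f₁ f₂ g : Ω → ℝ} (hf₁ : Integrable f₁ μ) (hf₂ : Integrable f₂ μ)
    (hf₁g : Integrable (f₁ * g) μ) (hf₂g : Integrable (f₂ * g) μ)
    (h₁ : μ[f₁ * g | m'] =ᵐ[μ] μ[f₁ | m'] * μ[g | m'])
    (h₂ : μ[f₂ * g | m'] =ᵐ[μ] μ[f₂ | m'] * μ[g | m']) :
    μ[(f₁ + f₂) * g | m'] =ᵐ[μ] μ[f₁ + f₂ | m'] * μ[g | m'] := by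
  rw [add_mul]
  filter_upwards [condExp_add hf₁g hf₂g m', condExp_add hf₁ hf₂ m', h₁, h₂] with ω e₁ e₂ e₃ e₄
  simp only [Pi.add_apply, Pi.mul_apply] at *
  rw [e₁, e₂, e₃, e₄]
  ring

lemma condExp_mul_indicator_ae_eq [IsFiniteMeasure μ] (hm' : m' ≤ mΩ) {W : Ω → ℝ} {S : Set Ω}
    (C : ℝ) (hW : StronglyMeasurable[m'] W) (hWC : ∀ᵐ ω ∂μ, |W ω| ≤ C) (hS : MeasurableSet S) :
    μ[W * S.indicator (fun _ => 1) | m'] =ᵐ[μ] W * μ⟦S | m'⟧ :=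
  condExp_mul_of_stronglyMeasurable_left hW
    ((IsCondSimple.mul_indicator C hW hWC hS).integrable hm' le_rfl)
    ((integrable_const 1).indicator hS)

lemma CondIndep.condExp_mul_ae_eq [StandardBorelSpace Ω] [IsFiniteMeasure μ] {hm' : m' ≤ mΩ}
    (hm₁ : m₁ ≤ mΩ) (hm₂ : m₂ ≤ mΩ) (h : CondIndep m' m₁ m₂ hm' μ) {f g : Ω → ℝ}
    (hf : IsCondSimple m' m₁ μ f) (hg : IsCondSimple m' m₂ μ g) :
    μ[f * g | m'] =ᵐ[μ] μ[f | m'] * μ[g | m'] := by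
  have hprod_int {f g : Ω → ℝ} (hf : IsCondSimple m' m₁ μ f) (hg : IsCondSimple m' m₂ μ g) :
      Integrable (f * g) μ :=
    ((hf.mono le_sup_left).mul (hg.mono le_sup_right)).integrable hm' (sup_le hm₁ hm₂)
  induction hf with
  | @mul_indicator W S C hW hWC hS =>
    induction hg with
    | @mul_indicator V T D hV hVD hT =>
      have hST := (condIndep_iff m' m₁ m₂ hm' hm₁ hm₂ μ).1 h S T hS hT
      calc μ[(W * S.indicator fun _ => 1) * (V * T.indicator fun _ => 1) | m']
          = μ[(W * V) * (S ∩ T).indicator fun _ => 1 | m'] := by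
            rw [mul_indicator_mul_mul_indicator]
        _ =ᵐ[μ] (W * V) * μ⟦S ∩ T | m'⟧ :=
            condExp_mul_indicator_ae_eq hm' (C * D) (hW.mul hV) (ae_abs_mul_le hWC hVD)
              ((hm₁ _ hS).inter (hm₂ _ hT))
        _ =ᵐ[μ] (W * V) * (μ⟦S | m'⟧ * μ⟦T | m'⟧) := EventuallyEq.rfl.mul hST
        _ = (W * μ⟦S | m'⟧) * (V * μ⟦T | m'⟧) := by ring
        _ =ᵐ[μ] _ := (condExp_mul_indicator_ae_eq hm' C hW hWC (hm₁ _ hS)).symm.mul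
            (condExp_mul_indicator_ae_eq hm' D hV hVD (hm₂ _ hT)).symm
    | @add g₁ g₂ hg₁ hg₂ ih₁ ih₂ =>
      have hf := IsCondSimple.mul_indicator C hW hWC hS
      rw [mul_comm, mul_comm μ[_ | m']] at ih₁ ih₂ ⊢
      exact condExp_add_mul_ae_eq (hg₁.integrable hm' hm₂) (hg₂.integrable hm' hm₂)
        (mul_comm g₁ _ ▸ hprod_int hf hg₁) (mul_comm g₂ _ ▸ hprod_int hf hg₂) ih₁ ih₂
  | @add f₁ f₂ hf₁ hf₂ ih₁ ih₂ =>
    exact condExp_add_mul_ae_eq (hf₁.integrable hm' hm₁) (hf₂.integrable hm' hm₁)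
      (hprod_int hf₁ hg) (hprod_int hf₂ hg) ih₁ ih₂

lemma condVar_finsetSum_ae_eq [IsFiniteMeasure μ] (hm : m ≤ mΩ) {ι : Type*} (s : Finset ι)
    {Z : ι → Ω → ℝ} (hZ : ∀ i ∈ s, MemLp (Z i) 2 μ) :
    Var[fun ω => ∑ i ∈ s, Z i ω; μ | m]
      =ᵐ[μ] fun ω => ∑ p ∈ s ×ˢ s, condCov μ m (Z p.1) (Z p.2) ω := by
  have hsum : (fun ω => ∑ i ∈ s, Z i ω) = ∑ i ∈ s, Z i := by ext; simp
  have hsq : (fun ω => ∑ i ∈ s, Z i ω) ^ 2 = ∑ p ∈ s ×ˢ s, Z p.1 * Z p.2 := by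
    ext; simp [sq, sum_mul_sum, sum_product]
  have hprod : ∀ p ∈ s ×ˢ s, Integrable (Z p.1 * Z p.2) μ := fun p hp =>
    (hZ _ (mem_product.1 hp).1).integrable_mul (hZ _ (mem_product.1 hp).2)
  filter_upwards [condVar_ae_eq_condExp_sq_sub_sq_condExp hm (memLp_finsetSum s hZ),
    condExp_finsetSum hprod m, condExp_finsetSum (fun i hi => (hZ i hi).integrable one_le_two) m]
    with ω hvar hsq' hmean
  rw [hvar, Pi.sub_apply, hsq, hsq', Pi.pow_apply, hsum, hmean]
  simp only [condCov, Finset.sum_apply, sq, sum_mul_sum, sum_product, ← sum_sub_distrib]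
  rfl

lemma condCov_le_of_abs_le {X Y : Ω → ℝ} {a b : ℝ} (hX : ∀ᵐ ω ∂μ, |X ω| ≤ a)
    (hY : ∀ᵐ ω ∂μ, |Y ω| ≤ b) : ∀ᵐ ω ∂μ, condCov μ m X Y ω ≤ 2 * (a * b) := by
  filter_upwards [ae_bdd_abs_condExp_of_ae_bdd_abs (m := m) (ae_abs_mul_le hX hY),
    ae_abs_mul_le (ae_bdd_abs_condExp_of_ae_bdd_abs (m := m) hX)
      (ae_bdd_abs_condExp_of_ae_bdd_abs (m := m) hY)] with ω h₁ h₂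
  rw [Pi.mul_apply] at h₂
  change μ[X * Y | m] ω - μ[X | m] ω * μ[Y | m] ω ≤ _
  linarith [(abs_le.1 h₁).2, (abs_le.1 h₂).1]

lemma condVar_sum_le_of_condCov_eq_zero [IsFiniteMeasure μ] (hm : m ≤ mΩ) {ι : Type*} [Fintype ι]
    {Z : ι → Ω → ℝ} (hZm : ∀ i, AEStronglyMeasurable (Z i) μ) {D : ℝ}
    (hZ : ∀ i, ∀ᵐ ω ∂μ, |Z i ω| ≤ D) (K : Finset (ι × ι))
    (hK : ∀ p ∉ K, condCov μ m (Z p.1) (Z p.2) =ᵐ[μ] 0) :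
    ∀ᵐ ω ∂μ, Var[fun ω => ∑ i, Z i ω; μ | m] ω ≤ 2 * D ^ 2 * #K := by
  classical
  have hpair (p : ι × ι) :
      ∀ᵐ ω ∂μ, condCov μ m (Z p.1) (Z p.2) ω ≤ if p ∈ K then 2 * D ^ 2 else 0 := by
    split_ifs with hp
    · simpa [sq] using condCov_le_of_abs_le (m := m) (hZ p.1) (hZ p.2)
    · exact (hK p hp).le
  filter_upwards [condVar_finsetSum_ae_eq hm univ fun i _ => MemLp.of_bound (hZm i) D (hZ i),
    ae_all_iff.2 hpair] with ω hvar hle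
  calc Var[fun ω => ∑ i, Z i ω; μ | m] ω
      = ∑ p ∈ univ ×ˢ univ, condCov μ m (Z p.1) (Z p.2) ω := hvar
    _ ≤ ∑ p ∈ univ ×ˢ univ, if p ∈ K then 2 * D ^ 2 else 0 := sum_le_sum fun p _ => hle p
    _ = 2 * D ^ 2 * #K := by simp [sum_ite_mem, mul_comm]

lemma ae_abs_sub_condExp_le_one {f : Ω → ℝ} (hf : ∀ ω, f ω ∈ Set.Icc 0 1) :
    ∀ᵐ ω ∂μ, |f ω - μ[f | m] ω| ≤ 1 := by
  have hf_abs (ω : Ω) : |f ω| ≤ 1 := abs_le.2 ⟨by linarith [(hf ω).1], (hf ω).2⟩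
  filter_upwards [condExp_nonneg (m := m) (μ := μ) (ae_of_all _ fun ω => (hf ω).1),
    ae_bdd_abs_condExp_of_ae_bdd_abs (m := m) (μ := μ) (ae_of_all _ hf_abs)] with ω h₀ h₁
  rw [Pi.zero_apply] at h₀
  rw [abs_le] at h₁ ⊢
  constructor <;> linarith [(hf ω).1, (hf ω).2, h₀, h₁.2]

lemma ae_abs_mul_sum_sub_condExp_le_card {ι : Type*} (s : Finset ι) {f : Ω → ℝ} {g : ι → Ω → ℝ}
    (hf : ∀ ω, f ω ∈ Set.Icc 0 1) (hg : ∀ j ω, g j ω ∈ Set.Icc 0 1) :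
    ∀ᵐ ω ∂μ, |(f ω - μ[f | m] ω) * ∑ j ∈ s, (g j ω - μ[g j | m] ω)| ≤ #s := by
  filter_upwards [ae_abs_sub_condExp_le_one (μ := μ) (m := m) hf,
    eventually_all_finset s |>.2 fun j _ => ae_abs_sub_condExp_le_one (μ := μ) (m := m) (hg j)]
    with ω h₁ h₂
  have hsum : |∑ j ∈ s, (g j ω - μ[g j | m] ω)| ≤ #s := by
    simpa using (abs_sum_le_sum_abs _ _).trans (sum_le_card_nsmul s _ 1 h₂)
  rw [abs_mul]
  simpa using mul_le_mul h₁ hsum (abs_nonneg _) zero_le_one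

end ProbabilityTheory

theorem stmt14_general {Ω : Type*} [mΩ : MeasurableSpace Ω] [StandardBorelSpace Ω]
    (μ : Measure Ω) [IsProbabilityMeasure μ]
    {N : Type*} [Fintype N] [DecidableEq N]
    (EG E0 : Finset (N × N))
    (Y0 Y1 : N → Ω → ℝ)
    (hY0m : ∀ j, Measurable (Y0 j)) (hY1m : ∀ i, Measurable (Y1 i))
    (hY0b : ∀ j ω, Y0 j ω = 0 ∨ Y0 j ω = 1)
    (hY1b : ∀ i ω, Y1 i ω = 0 ∨ Y1 i ω = 1)
    (G G0 : MeasurableSpace Ω) (hGG0 : G ≤ G0) (hG0 : G0 ≤ mΩ)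
    (hdep : ∀ i₁ i₂ : N,
      (insert i₁ (inNbhd EG i₁ ∪ inNbhd E0 i₁)) ∩ (insert i₂ (inNbhd EG i₂ ∪ inNbhd E0 i₂)) = ∅ →
      CondIndepFun G0 hG0
        (fun ω => (Y1 i₁ ω,
          fun j : ((insert i₁ (inNbhd EG i₁ ∪ inNbhd E0 i₁) : Finset N) : Type _) => Y0 j ω))
        (fun ω => (Y1 i₂ ω,
          fun j : ((insert i₂ (inNbhd EG i₂ ∪ inNbhd E0 i₂) : Finset N) : Type _) => Y0 j ω))
        μ) :
    -- (i) zero conditional covariance for non-overlapping pairs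
    (∀ i₁ i₂ : N,
      (insert i₁ (inNbhd EG i₁ ∪ inNbhd E0 i₁)) ∩ (insert i₂ (inNbhd EG i₂ ∪ inNbhd E0 i₂)) = ∅ →
      condCov μ G0
        (fun ω => (Y1 i₁ ω - (μ[Y1 i₁ | G]) ω)
          * ∑ j ∈ inNbhd EG i₁, (Y0 j ω - (μ[Y0 j | G]) ω))
        (fun ω => (Y1 i₂ ω - (μ[Y1 i₂ | G]) ω)
          * ∑ j ∈ inNbhd EG i₂, (Y0 j ω - (μ[Y0 j | G]) ω)) =ᵐ[μ] 0)
    -- (ii) conditional variance bound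
    ∧ (∀ᵐ ω ∂μ,
      (μ[fun ω' =>
          ((∑ i, (Y1 i ω' - (μ[Y1 i | G]) ω')
              * ∑ j ∈ inNbhd EG i, (Y0 j ω' - (μ[Y0 j | G]) ω'))
            - (μ[fun ω'' => ∑ i, (Y1 i ω'' - (μ[Y1 i | G]) ω'')
                  * ∑ j ∈ inNbhd EG i, (Y0 j ω'' - (μ[Y0 j | G]) ω'') | G0]) ω') ^ 2
        | G0]) ω
        ≤ 2 * ((Finset.univ.sup (fun i => (inNbhd EG i).card) : ℕ) : ℝ) ^ 2
            * (((Finset.univ ×ˢ Finset.univ).filter (fun q : N × N =>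
                ((insert q.1 (inNbhd EG q.1 ∪ inNbhd E0 q.1))
                  ∩ (insert q.2 (inNbhd EG q.2 ∪ inNbhd E0 q.2))).Nonempty)).card : ℝ)) := by
  let nbhd (i : N) : Finset N := insert i (inNbhd EG i ∪ inNbhd E0 i)
  let Z (i : N) (ω : Ω) : ℝ :=
    (Y1 i ω - (μ[Y1 i | G]) ω) * ∑ j ∈ inNbhd EG i, (Y0 j ω - (μ[Y0 j | G]) ω)
  let ψ (i : N) (ω : Ω) : ℝ × (nbhd i → ℝ) := (Y1 i ω, fun j => Y0 j ω)
  have hψ (i : N) : Measurable[mΩ] (ψ i) := (hY1m i).prodMk (by fun_prop)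
  have hZ_simple (i : N) : IsCondSimple G0 (.comap (ψ i) inferInstance) μ (Z i) := by
    have hψ_comap : Measurable[.comap (ψ i) inferInstance] (ψ i) := comap_measurable (ψ i)
    have hZ_eq : Z i = (Y1 i - μ[Y1 i | G]) * ∑ j ∈ inNbhd EG i, (Y0 j - μ[Y0 j | G]) := by
      ext ω; simp [Z, Finset.sum_apply]
    rw [hZ_eq]
    refine (IsCondSimple.sub_condExp hGG0 (measurable_fst.comp hψ_comap) (hY1b i)).mul
      (IsCondSimple.finsetSum _ fun j hj => IsCondSimple.sub_condExp hGG0 ?_ (hY0b j))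
    have hj' : j ∈ nbhd i := mem_insert_of_mem (mem_union_left _ hj)
    exact (measurable_pi_apply (⟨j, hj'⟩ : nbhd i)).comp (measurable_snd.comp hψ_comap)
  have hcov (i₁ i₂ : N) (h : nbhd i₁ ∩ nbhd i₂ = ∅) : condCov μ G0 (Z i₁) (Z i₂) =ᵐ[μ] 0 := by
    filter_upwards [((condIndepFun_iff_condIndep _ _ _ _ _).1 (hdep i₁ i₂ h)).condExp_mul_ae_eq
      (hψ i₁).comap_le (hψ i₂).comap_le (hZ_simple i₁) (hZ_simple i₂)] with ω hω
    exact sub_eq_zero.2 hω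
  refine ⟨hcov, ?_⟩
  have hIcc {x : ℝ} (h : x = 0 ∨ x = 1) : x ∈ Set.Icc (0 : ℝ) 1 := by
    rcases h with rfl | rfl <;> simp
  have hZ_bound (i : N) :
      ∀ᵐ ω ∂μ, |Z i ω| ≤ ((univ.sup fun i => #(inNbhd EG i) : ℕ) : ℝ) := by
    filter_upwards [ae_abs_mul_sum_sub_condExp_le_card (μ := μ) (m := G) (inNbhd EG i)
      (fun ω => hIcc (hY1b i ω)) (fun j ω => hIcc (hY0b j ω))] with ω h
    exact h.trans (mod_cast le_sup (f := fun i => #(inNbhd EG i)) (mem_univ i))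
  exact condVar_sum_le_of_condCov_eq_zero hG0
    (fun i => ((hZ_simple i).integrable hG0 (hψ i).comap_le).aestronglyMeasurable) hZ_bound _
    fun p hp => hcov p.1 p.2 (by simpa [not_nonempty_iff_eq_empty] using hp)

/-- Lemma B.1(ii) of the supplemental note to He–Song, "Measuring
Diffusion over a Large Network".  With `N(i) = N_G(i) ∪ N∘(i)` and `N̄(i) = N(i) ∪ {i}`,
if the vectors `(Y_{i,1}, (Y_{j,0})_{j ∈ N̄(i)})` are conditionally independent given `𝒢∘`
whenever the closed neighborhoods are disjoint, then (i) the corresponding products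
`ε_{i,1} a_i` are conditionally uncorrelated given `𝒢∘`, and (ii) the conditional variance
of their sum is at most `2 d_{mx,G}²` times the number of overlapping pairs. -/
theorem stmt14 {Ω : Type*} [mΩ : MeasurableSpace Ω] [StandardBorelSpace Ω]
    (μ : Measure Ω) [IsProbabilityMeasure μ]
    {N : Type*} [Fintype N] [DecidableEq N]
    (EG E0 : Finset (N × N)) (hEG : ∀ e ∈ EG, e.1 ≠ e.2) (hE0 : ∀ e ∈ E0, e.1 ≠ e.2)
    (Y0 Y1 : N → Ω → ℝ)
    (hY0m : ∀ j, Measurable (Y0 j)) (hY1m : ∀ i, Measurable (Y1 i))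
    (hY0b : ∀ j ω, Y0 j ω = 0 ∨ Y0 j ω = 1)
    (hY1b : ∀ i ω, Y1 i ω = 0 ∨ Y1 i ω = 1)
    (G G0 : MeasurableSpace Ω) (hGG0 : G ≤ G0) (hG0 : G0 ≤ mΩ)
    (hdep : ∀ i₁ i₂ : N,
      (insert i₁ (inNbhd EG i₁ ∪ inNbhd E0 i₁)) ∩ (insert i₂ (inNbhd EG i₂ ∪ inNbhd E0 i₂)) = ∅ →
      CondIndepFun G0 hG0
        (fun ω => (Y1 i₁ ω,
          fun j : ((insert i₁ (inNbhd EG i₁ ∪ inNbhd E0 i₁) : Finset N) : Type _) => Y0 j ω))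
        (fun ω => (Y1 i₂ ω,
          fun j : ((insert i₂ (inNbhd EG i₂ ∪ inNbhd E0 i₂) : Finset N) : Type _) => Y0 j ω))
        μ) :
    -- (i) zero conditional covariance for non-overlapping pairs
    (∀ i₁ i₂ : N,
      (insert i₁ (inNbhd EG i₁ ∪ inNbhd E0 i₁)) ∩ (insert i₂ (inNbhd EG i₂ ∪ inNbhd E0 i₂)) = ∅ →
      condCov μ G0
        (fun ω => (Y1 i₁ ω - (μ[Y1 i₁ | G]) ω)
          * ∑ j ∈ inNbhd EG i₁, (Y0 j ω - (μ[Y0 j | G]) ω))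
        (fun ω => (Y1 i₂ ω - (μ[Y1 i₂ | G]) ω)
          * ∑ j ∈ inNbhd EG i₂, (Y0 j ω - (μ[Y0 j | G]) ω)) =ᵐ[μ] 0)
    -- (ii) conditional variance bound
    ∧ (∀ᵐ ω ∂μ,
      (μ[fun ω' =>
          ((∑ i, (Y1 i ω' - (μ[Y1 i | G]) ω')
              * ∑ j ∈ inNbhd EG i, (Y0 j ω' - (μ[Y0 j | G]) ω'))
            - (μ[fun ω'' => ∑ i, (Y1 i ω'' - (μ[Y1 i | G]) ω'')
                  * ∑ j ∈ inNbhd EG i, (Y0 j ω'' - (μ[Y0 j | G]) ω'') | G0]) ω') ^ 2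
        | G0]) ω
        ≤ 2 * ((Finset.univ.sup (fun i => (inNbhd EG i).card) : ℕ) : ℝ) ^ 2
            * (((Finset.univ ×ˢ Finset.univ).filter (fun q : N × N =>
                ((insert q.1 (inNbhd EG q.1 ∪ inNbhd E0 q.1))
                  ∩ (insert q.2 (inNbhd EG q.2 ∪ inNbhd E0 q.2))).Nonempty)).card : ℝ)) :=
  stmt14_general (mΩ := mΩ) μ EG E0 Y0 Y1 hY0m hY1m hY0b hY1b G G0 hGG0 hG0 hdep
end
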